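/- arXiv:1411.0627 — 9 statements merged into one kernel-verified Lean document; each statement's English description precedes it below -/
import Mathlib

section
/- For any formal fan F, the projective realization P(F) is homeomorphic to (|F| ∖ {*})/ℝ_{>0}, where * ∈ |F| is the cone point (the common image of the origins of the cones (ℝ_{≥0})^n) and ℝ_{>0} acts on |F| by the action induced by scalar multiplication on each cone (ℝ_{≥0})^n. -/
open CategoryTheory

/-- The category `𝔠` of integral simplicial cones: objects are positive integers `[n]`, and
morphisms `[k] → [n]` are the injective group homomorphisms `ℤᵏ → ℤⁿ` (encoded as `n × k`
integer matrices) carrying the standard basis of `ℤᵏ` into the cone spanned by the standard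
basis of `ℤⁿ` (i.e. with nonnegative entries). -/
structure ConeCat : Type where
  n : ℕ
  pos : 0 < n

instance : Category ConeCat where
  Hom k n := {A : Matrix (Fin n.n) (Fin k.n) ℤ //
    (∀ i j, 0 ≤ A i j) ∧ Function.Injective A.mulVecLin}
  id k := ⟨1, ⟨fun i j => by by_cases h : i = j <;> simp [Matrix.one_apply, h],
    by rw [Matrix.mulVecLin_one]; exact fun a b h => h⟩⟩
  comp f g := ⟨g.1 * f.1,
    ⟨fun i j => by
        rw [Matrix.mul_apply]
        exact Finset.sum_nonneg fun l _ => mul_nonneg (g.2.1 i l) (f.2.1 l j),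
      by rw [Matrix.mulVecLin_mul, LinearMap.coe_comp]; exact g.2.2.comp f.2.2⟩⟩
  id_comp f := Subtype.ext (Matrix.mul_one _)
  comp_id f := Subtype.ext (Matrix.one_mul _)
  assoc f g h := Subtype.ext (Matrix.mul_assoc _ _ _).symm

/-- The underlying matrix of a morphism of `𝔠`. -/
def homMatrix {k n : ConeCat} (φ : k ⟶ n) : Matrix (Fin n.n) (Fin k.n) ℤ := Subtype.val φ

/-- The points of the disjoint union `⨿ F_n × (ℝ_{≥0})ⁿ` over all cones of a formal fan
`F : 𝔠ᵒᵖ ⥤ Set`. -/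
abbrev FanPt (F : ConeCatᵒᵖ ⥤ Type) : Type :=
  Σ (c : ConeCat) (_ : F.obj (Opposite.op c)), {x : Fin c.n → ℝ // ∀ i, 0 ≤ x i}

/-- The colimit-defining relation for the geometric realization `|F|`: the point `x` in the
chart of `φ^*ξ` is identified with the point `φ_ℝ(x)` in the chart of `ξ`. -/
def fanRel (F : ConeCatᵒᵖ ⥤ Type) : FanPt F → FanPt F → Prop := fun p q =>
  ∃ φ : p.1 ⟶ q.1, F.map φ.op q.2.1 = p.2.1 ∧
    ∀ j, q.2.2.val j = ∑ i, ((homMatrix φ j i : ℤ) : ℝ) * p.2.2.val i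

/-- The geometric realization `|F|` of a formal fan, as a quotient topological space. -/
abbrev GeomReal (F : ConeCatᵒᵖ ⥤ Type) : Type := Quot (fanRel F)

/-- The cone points of `|F|`: the images of the origins of the cones `(ℝ_{≥0})ⁿ`. -/
def conePoints (F : ConeCatᵒᵖ ⥤ Type) : Set (GeomReal F) :=
  {z | ∃ p : FanPt F, (∀ i, p.2.2.val i = 0) ∧ z = Quot.mk (fanRel F) p}

/-- Scaling a point of a chart by a nonnegative scalar `c`. -/
def smulPt {F : ConeCatᵒᵖ ⥤ Type} (c : ℝ) (hc : 0 ≤ c) (p : FanPt F) : FanPt F :=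
  ⟨p.1, p.2.1, ⟨fun i => c * p.2.2.val i, fun i => mul_nonneg hc (p.2.2.property i)⟩⟩

/-- The subspace `|F| ∖ {cone points}`. -/
abbrev GeomNonzero (F : ConeCatᵒᵖ ⥤ Type) : Type := {z : GeomReal F // z ∉ conePoints F}

/-- The orbit relation for the action of `ℝ_{>0}` on `|F| ∖ {cone points}` induced by scalar
multiplication on each cone `(ℝ_{≥0})ⁿ`. -/
def scaleRel (F : ConeCatᵒᵖ ⥤ Type) : GeomNonzero F → GeomNonzero F → Prop := fun z w =>
  ∃ (c : ℝ) (hc : 0 < c) (p : FanPt F),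
    z.val = Quot.mk (fanRel F) p ∧ w.val = Quot.mk (fanRel F) (smulPt c hc.le p)

/-- The quotient `(|F| ∖ {*})/ℝ_{>0}`. -/
abbrev GeomProjQuot (F : ConeCatᵒᵖ ⥤ Type) : Type := Quot (scaleRel F)

/-- The standard simplex `Δ^{n-1}`, realized as `{x ∈ (ℝ_{≥0})ⁿ | ∑ xᵢ = 1}`. -/
abbrev stdSimplex' (n : ℕ) : Type :=
  {x : Fin n → ℝ // (∀ i, 0 ≤ x i) ∧ ∑ i, x i = 1}

/-- The points of the disjoint union `⨿ F_n × Δ^{n-1}`. -/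
abbrev SimpPt (F : ConeCatᵒᵖ ⥤ Type) : Type :=
  Σ (c : ConeCat) (_ : F.obj (Opposite.op c)), stdSimplex' c.n

/-- The colimit-defining relation for the projective realization `P(F)`: the point `x` in the
simplex of `φ^*ξ` is identified with the positive rescaling of `φ_ℝ(x)` in the simplex
of `ξ`. -/
def simpRel (F : ConeCatᵒᵖ ⥤ Type) : SimpPt F → SimpPt F → Prop := fun p q =>
  ∃ φ : p.1 ⟶ q.1, F.map φ.op q.2.1 = p.2.1 ∧
    ∃ c : ℝ, 0 < c ∧ ∀ j, q.2.2.val j = c * ∑ i, ((homMatrix φ j i : ℤ) : ℝ) * p.2.2.val i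

/-- The projective realization `P(F)` of a formal fan, as a quotient topological space. -/
abbrev ProjReal (F : ConeCatᵒᵖ ⥤ Type) : Type := Quot (simpRel F)

/-!
Normalizing the coordinate sum to `1` sends a nonzero point of a cone `(ℝ_{≥0})ⁿ` to its simplex.
It is invariant under positive scaling, and it is compatible with the face maps up to a positive
factor; the inclusion of a simplex into its cone is inverse to it up to scaling. Normalization is
well defined and nonvanishing on `|F| ∖ {*}` because the matrices of morphisms of `𝔠` are
injective with nonnegative entries, so they send no nonzero point of a cone to the origin. It is continuous
because `|F| ∖ {*}` is the quotient of the disjoint union of the punctured cones, which is open in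
the disjoint union of the cones.
-/

open Topology

section SumNormalize

variable {ι : Type*} [Fintype ι]

noncomputable def sumNormalize (x : ι → ℝ) : ι → ℝ := (∑ i, x i)⁻¹ • x

theorem sum_pos_of_nonneg_of_ne_zero {x : ι → ℝ} (hx : 0 ≤ x) (hne : x ≠ 0) :
    0 < ∑ i, x i :=
  Fintype.sum_pos (lt_of_le_of_ne hx (Ne.symm hne))

theorem sum_sumNormalize {x : ι → ℝ} (hx : ∑ i, x i ≠ 0) :
    ∑ i, sumNormalize x i = 1 := by
  simp only [sumNormalize, Pi.smul_apply, smul_eq_mul, ← Finset.mul_sum, inv_mul_cancel₀ hx]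

theorem sum_smul_sumNormalize {x : ι → ℝ} (hx : ∑ i, x i ≠ 0) :
    (∑ i, x i) • sumNormalize x = x := by
  rw [sumNormalize, smul_smul, mul_inv_cancel₀ hx, one_smul]

theorem sumNormalize_smul {c : ℝ} (hc : c ≠ 0) (x : ι → ℝ) :
    sumNormalize (c • x) = sumNormalize x := by
  simp only [sumNormalize, Pi.smul_apply, smul_eq_mul, ← Finset.mul_sum, smul_smul,
    mul_inv_rev, inv_mul_cancel_right₀ hc]

theorem sumNormalize_of_sum_eq_one {x : ι → ℝ} (hx : ∑ i, x i = 1) : sumNormalize x = x := by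
  rw [sumNormalize, hx, inv_one, one_smul]

theorem sumNormalize_nonneg {x : ι → ℝ} (hx : 0 ≤ x) : 0 ≤ sumNormalize x :=
  smul_nonneg (inv_nonneg.mpr (Finset.sum_nonneg fun i _ => hx i)) hx

theorem sumNormalize_mulVec {κ : Type*} [Fintype κ] (M : Matrix κ ι ℝ) {x : ι → ℝ}
    (hx : ∑ i, x i ≠ 0) :
    sumNormalize (M.mulVec x) =
      ((∑ k, M.mulVec x k)⁻¹ * ∑ i, x i) • M.mulVec (sumNormalize x) := by
  rw [sumNormalize, mul_smul]
  congr 1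
  rw [← Matrix.mulVec_smul, sum_smul_sumNormalize hx]

theorem continuousOn_sumNormalize : ContinuousOn sumNormalize {x : ι → ℝ | ∑ i, x i ≠ 0} :=
  ((continuous_finsetSum _ fun i _ => continuous_apply i).continuousOn.inv₀ fun _ h => h).smul
    continuousOn_id

end SumNormalize

theorem Matrix.eq_zero_of_mulVec_eq_zero_of_nonneg {m n : Type*} [Fintype m] [Fintype n]
    [DecidableEq n] {A : Matrix m n ℤ} (hA : ∀ i j, 0 ≤ A i j)
    (hinj : Function.Injective A.mulVecLin) {x : n → ℝ} (hx : 0 ≤ x)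
    (h : (A.map (Int.cast : ℤ → ℝ)).mulVec x = 0) : x = 0 := by
  by_contra hne
  obtain ⟨j, hj⟩ : ∃ j, x j ≠ 0 := Function.ne_iff.mp hne
  obtain ⟨i, hi⟩ : ∃ i, A i j ≠ 0 := by
    by_contra! hcol
    have : A.mulVecLin (Pi.single j 1) = A.mulVecLin 0 := by
      rw [map_zero, Matrix.mulVecLin_apply, Matrix.mulVec_single_one]
      exact funext hcol
    simpa using congrFun (hinj this) j
  have hpos : 0 < (A.map (Int.cast : ℤ → ℝ)).mulVec x i :=
    calc 0 < (A i j : ℝ) * x j :=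
          mul_pos (by exact_mod_cast (hA i j).lt_of_ne' hi) ((hx j).lt_of_ne' hj)
      _ ≤ ∑ k, (A i k : ℝ) * x k :=
          Finset.single_le_sum (f := fun k => (A i k : ℝ) * x k)
            (fun k _ => mul_nonneg (by exact_mod_cast hA i k) (hx k)) (Finset.mem_univ j)
  exact hpos.ne' (congrFun h i)

def homMatrixReal {k n : ConeCat} (φ : k ⟶ n) : Matrix (Fin n.n) (Fin k.n) ℝ :=
  (homMatrix φ).map (Int.cast : ℤ → ℝ)

section

variable {F : ConeCatᵒᵖ ⥤ Type}

theorem fanRel_val_eq_zero_iff {p q : FanPt F} (h : fanRel F p q) :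
    p.2.2.val = 0 ↔ q.2.2.val = 0 := by
  obtain ⟨φ, -, hval⟩ := h
  have hq : q.2.2.val = (homMatrixReal φ).mulVec p.2.2.val := funext hval
  rw [hq]
  exact ⟨fun hp => hp ▸ Matrix.mulVec_zero _,
    Matrix.eq_zero_of_mulVec_eq_zero_of_nonneg φ.2.1 φ.2.2 p.2.2.2⟩

theorem mk_mem_conePoints_iff {p : FanPt F} :
    Quot.mk (fanRel F) p ∈ conePoints F ↔ p.2.2.val = 0 := by
  let IsConePoint : GeomReal F → Prop :=
    Quot.lift (fun p => p.2.2.val = 0) fun _ _ h => propext (fanRel_val_eq_zero_iff h)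
  constructor
  · rintro ⟨q, hq, heq⟩
    exact (congrArg IsConePoint heq).mpr (funext hq)
  · intro hp
    exact ⟨p, congrFun hp, rfl⟩

abbrev PuncturedCone (n : ℕ) : Type :=
  {x : {x : Fin n → ℝ // ∀ i, 0 ≤ x i} // x.val ≠ 0}

variable (F) in
abbrev NonzeroFanPt : Type := Σ (c : ConeCat) (_ : F.obj (Opposite.op c)), PuncturedCone c.n

def NonzeroFanPt.toFanPt : NonzeroFanPt F → FanPt F :=
  Sigma.map id fun _ => Sigma.map id fun _ => Subtype.val

theorem isOpenEmbedding_toFanPt : IsOpenEmbedding (NonzeroFanPt.toFanPt (F := F)) :=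
  (isOpenEmbedding_sigmaMap Function.injective_id).mpr fun _ =>
    (isOpenEmbedding_sigmaMap Function.injective_id).mpr fun _ =>
      (isOpen_ne_fun continuous_subtype_val continuous_const).isOpenEmbedding_subtypeVal

theorem preimage_conePoints_compl :
    Quot.mk (fanRel F) ⁻¹' (conePoints F)ᶜ = Set.range NonzeroFanPt.toFanPt := by
  ext p
  constructor
  · intro hp
    exact ⟨⟨p.1, p.2.1, p.2.2, mk_mem_conePoints_iff.not.mp hp⟩, rfl⟩
  · rintro ⟨q, rfl⟩
    exact mk_mem_conePoints_iff.not.mpr q.2.2.2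

theorem isOpen_conePoints_compl : IsOpen (conePoints F)ᶜ := by
  rw [← isQuotientMap_quot_mk.isOpen_preimage, preimage_conePoints_compl]
  exact isOpenEmbedding_toFanPt.isOpen_range

def NonzeroFanPt.toGeomNonzero (p : NonzeroFanPt F) : GeomNonzero F :=
  ⟨Quot.mk _ p.toFanPt, mk_mem_conePoints_iff.not.mpr p.2.2.2⟩

theorem isQuotientMap_toGeomNonzero : IsQuotientMap (NonzeroFanPt.toGeomNonzero (F := F)) := by
  have hrange : ∀ p : NonzeroFanPt F, p.toFanPt ∈ Quot.mk (fanRel F) ⁻¹' (conePoints F)ᶜ :=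
    fun p => preimage_conePoints_compl ▸ Set.mem_range_self p
  have hsurj : Function.Surjective (Set.codRestrict _ _ hrange) := by
    rintro ⟨_, hp⟩
    rw [preimage_conePoints_compl] at hp
    obtain ⟨p, rfl⟩ := hp
    exact ⟨p, rfl⟩
  have hcod : IsOpenQuotientMap (Set.codRestrict _ _ hrange) :=
    ⟨hsurj, isOpenEmbedding_toFanPt.continuous.codRestrict hrange,
      isOpenEmbedding_toFanPt.isOpenMap.codRestrict hrange⟩
  exact (isQuotientMap_quot_mk.restrictPreimage_isOpen isOpen_conePoints_compl).comp
    hcod.isQuotientMap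

noncomputable def PuncturedCone.toSimplex {n : ℕ} (x : PuncturedCone n) : stdSimplex' n :=
  ⟨sumNormalize x.1.1, sumNormalize_nonneg x.1.2,
    sum_sumNormalize (sum_pos_of_nonneg_of_ne_zero x.1.2 x.2).ne'⟩

theorem PuncturedCone.continuous_toSimplex {n : ℕ} :
    Continuous (PuncturedCone.toSimplex (n := n)) :=
  (continuousOn_sumNormalize.comp_continuous (continuous_subtype_val.comp continuous_subtype_val)
    fun x => (sum_pos_of_nonneg_of_ne_zero x.1.2 x.2).ne').subtype_mk _

noncomputable def NonzeroFanPt.normalize : NonzeroFanPt F → SimpPt F :=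
  Sigma.map id fun _ => Sigma.map id fun _ => PuncturedCone.toSimplex

theorem continuous_normalize : Continuous (NonzeroFanPt.normalize (F := F)) :=
  Continuous.sigma_map fun _ => Continuous.sigma_map fun _ => PuncturedCone.continuous_toSimplex

theorem simpRel_normalize_of_fanRel {p q : NonzeroFanPt F} (h : fanRel F p.toFanPt q.toFanPt) :
    simpRel F p.normalize q.normalize := by
  obtain ⟨φ, hξ, hval⟩ := h
  have hp := sum_pos_of_nonneg_of_ne_zero p.2.2.1.2 p.2.2.2
  have hq := sum_pos_of_nonneg_of_ne_zero q.2.2.1.2 q.2.2.2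
  have hqp : q.2.2.1.1 = (homMatrixReal φ).mulVec p.2.2.1.1 := funext hval
  refine ⟨φ, hξ, _, mul_pos (inv_pos.mpr hq) hp, fun j => ?_⟩
  have hnorm := congrFun (sumNormalize_mulVec (homMatrixReal φ) hp.ne') j
  rwa [← hqp] at hnorm

/-- Normalization of a chart point, defined exactly off the cone points; as a `Part` it needs no
nonvanishing hypothesis, so it descends to `GeomReal F` by `Quot.lift`. -/
noncomputable def FanPt.normalizePart (p : FanPt F) : Part (ProjReal F) :=
  ⟨p.2.2.val ≠ 0, fun hp => Quot.mk _ (NonzeroFanPt.normalize ⟨p.1, p.2.1, p.2.2, hp⟩)⟩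

theorem normalizePart_eq_of_fanRel {p q : FanPt F} (h : fanRel F p q) :
    p.normalizePart = q.normalizePart :=
  Part.ext' (not_congr (fanRel_val_eq_zero_iff h)) fun _ _ =>
    Quot.sound (simpRel_normalize_of_fanRel h)

theorem dom_lift_normalizePart (z : GeomNonzero F) :
    (Quot.lift FanPt.normalizePart (fun _ _ => normalizePart_eq_of_fanRel) z.1).Dom := by
  obtain ⟨z, hz⟩ := z
  induction z using Quot.ind with
  | _ p => exact mk_mem_conePoints_iff.not.mp hz

noncomputable def GeomNonzero.projectivize (z : GeomNonzero F) : ProjReal F :=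
  (Quot.lift FanPt.normalizePart (fun _ _ => normalizePart_eq_of_fanRel) z.1).get
    (dom_lift_normalizePart z)

theorem continuous_projectivize : Continuous (GeomNonzero.projectivize (F := F)) :=
  isQuotientMap_toGeomNonzero.continuous_iff.mpr (continuous_quot_mk.comp continuous_normalize)

theorem projectivize_eq_of_scaleRel {z w : GeomNonzero F} (h : scaleRel F z w) :
    z.projectivize = w.projectivize := by
  obtain ⟨c, hc, p, hz, hw⟩ := h
  have hp : p.2.2.val ≠ 0 := mk_mem_conePoints_iff.not.mp (hz ▸ z.2)
  obtain rfl : z = NonzeroFanPt.toGeomNonzero ⟨p.1, p.2.1, p.2.2, hp⟩ := Subtype.ext hz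
  obtain rfl : w = NonzeroFanPt.toGeomNonzero
      ⟨p.1, p.2.1, (smulPt c hc.le p).2.2, smul_ne_zero hc.ne' hp⟩ := Subtype.ext hw
  exact congrArg
    (fun x : stdSimplex' p.1.n => (Quot.mk (simpRel F) ⟨p.1, p.2.1, x⟩ : ProjReal F))
    (Subtype.ext (sumNormalize_smul hc.ne' p.2.2.val)).symm

def stdSimplex'.toPuncturedCone {n : ℕ} (x : stdSimplex' n) : PuncturedCone n :=
  ⟨⟨x.1, x.2.1⟩, fun h => by
    have hsum := x.2.2
    rw [show x.1 = 0 from h] at hsum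
    simp at hsum⟩

def SimpPt.toNonzeroFanPt : SimpPt F → NonzeroFanPt F :=
  Sigma.map id fun _ => Sigma.map id fun _ => stdSimplex'.toPuncturedCone

theorem continuous_toNonzeroFanPt : Continuous (SimpPt.toNonzeroFanPt (F := F)) :=
  Continuous.sigma_map fun _ => Continuous.sigma_map fun _ =>
    (continuous_subtype_val.subtype_mk _).subtype_mk _

theorem normalize_toNonzeroFanPt (p : SimpPt F) : p.toNonzeroFanPt.normalize = p :=
  congrArg (fun x : stdSimplex' p.1.n => (⟨p.1, p.2.1, x⟩ : SimpPt F))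
    (Subtype.ext (sumNormalize_of_sum_eq_one p.2.2.2.2))

theorem scaleRel_of_simpRel {p q : SimpPt F} (h : simpRel F p q) :
    scaleRel F p.toNonzeroFanPt.toGeomNonzero q.toNonzeroFanPt.toGeomNonzero := by
  obtain ⟨φ, hξ, c, hc, hval⟩ := h
  let image : FanPt F := ⟨q.1, q.2.1, (homMatrixReal φ).mulVec p.2.2.1,
    fun j => show (0 : ℝ) ≤ ∑ i, _ from Finset.sum_nonneg fun i _ =>
      mul_nonneg (Int.cast_nonneg (φ.2.1 j i)) (p.2.2.2.1 i)⟩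
  refine ⟨c, hc, image, Quot.sound ⟨φ, hξ, fun _ => rfl⟩, congrArg (Quot.mk _) ?_⟩
  exact congrArg (fun x => (⟨q.1, q.2.1, x⟩ : FanPt F)) (Subtype.ext (funext hval))

noncomputable def ProjReal.toGeomProjQuot : ProjReal F → GeomProjQuot F :=
  Quot.lift (fun p => Quot.mk _ p.toNonzeroFanPt.toGeomNonzero) fun _ _ h =>
    Quot.sound (scaleRel_of_simpRel h)

noncomputable def GeomProjQuot.toProjReal : GeomProjQuot F → ProjReal F :=
  Quot.lift GeomNonzero.projectivize fun _ _ => projectivize_eq_of_scaleRel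

theorem continuous_toGeomProjQuot : Continuous (ProjReal.toGeomProjQuot (F := F)) :=
  continuous_quot_lift _ <| continuous_quot_mk.comp <|
    isQuotientMap_toGeomNonzero.continuous.comp continuous_toNonzeroFanPt

theorem continuous_toProjReal : Continuous (GeomProjQuot.toProjReal (F := F)) :=
  continuous_quot_lift _ continuous_projectivize

theorem toProjReal_toGeomProjQuot (x : ProjReal F) : x.toGeomProjQuot.toProjReal = x := by
  induction x using Quot.ind with
  | _ p => exact congrArg (Quot.mk _) (normalize_toNonzeroFanPt p)

theorem toGeomProjQuot_toProjReal (z : GeomProjQuot F) : z.toProjReal.toGeomProjQuot = z := by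
  induction z using Quot.ind with
  | _ z =>
    obtain ⟨p, rfl⟩ := isQuotientMap_toGeomNonzero.surjective z
    have hp := sum_pos_of_nonneg_of_ne_zero p.2.2.1.2 p.2.2.2
    exact (Quot.sound ⟨_, inv_pos.mpr hp, p.toFanPt, rfl, rfl⟩).symm

end

/-- The projective realization `P(F)` of a formal fan is homeomorphic to the quotient
`(|F| ∖ {*})/ℝ_{>0}` of the geometric realization minus the cone points by the scaling
action of `ℝ_{>0}`, via the map sending the class of a point of the simplex `Δ^{ξ}` to the
class of the corresponding point of the cone of `ξ`. -/
theorem projReal_homeomorph_quotient_geomReal (F : ConeCatᵒᵖ ⥤ Type) :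
    ∃ h : ProjReal F ≃ₜ GeomProjQuot F,
      ∀ (p : SimpPt F)
        (hz : (Quot.mk (fanRel F) ⟨p.1, p.2.1, ⟨p.2.2.val, p.2.2.property.1⟩⟩ : GeomReal F) ∉
          conePoints F),
        h (Quot.mk (simpRel F) p) =
          Quot.mk (scaleRel F)
            ⟨Quot.mk (fanRel F) ⟨p.1, p.2.1, ⟨p.2.2.val, p.2.2.property.1⟩⟩, hz⟩ :=
  ⟨{ toFun := ProjReal.toGeomProjQuot
     invFun := GeomProjQuot.toProjReal
     left_inv := toProjReal_toGeomProjQuot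
     right_inv := toGeomProjQuot_toProjReal
     continuous_toFun := continuous_toGeomProjQuot
     continuous_invFun := continuous_toProjReal }, fun _ _ => rfl⟩
end

section
/- Let F be a formal fan and let x ∈ P(F) be a point lying in the images of two rational simplices, i.e. x ∈ ξ₀(Δ^{n₀−1}) ∩ ξ₁(Δ^{n₁−1}) for elements ξ₀ ∈ F_{n₀} and ξ₁ ∈ F_{n₁}. Then there exist m ≥ 1, an element ξ ∈ F_m, morphisms φ_i : [m] → [n_i] in 𝔠 (i = 0, 1) with φ_i^*(ξ_i) = ξ, and a point of Δ^{m−1} mapping to x; in particular x lies in the image of the rational simplex ξ(Δ^{m−1}) ⊆ P(F), which is contained in both ξ₀(Δ^{n₀−1}) and ξ₁(Δ^{n₁−1}). -/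
open CategoryTheory

/-!
Equality in `P(F)` is generated by `simpRel`, so it suffices to show that having a common
refinement is a transitive relation. Two refinements meeting in a simplex of `[q]` give integer
matrices `A`, `B` into `ℤ^q` and nonnegative real vectors `a`, `b` with `A a = B b`. Rational
vectors are dense in the real kernel of `(A | -B)`, so `(a, b)` is a nonnegative combination of
nonnegative integral kernel vectors `(λₖ, μₖ)`, which by conic Carathéodory may be taken linearly
independent. The matrices with columns `λₖ` and `μₖ` are then injective because `A` and `B` are,
and they define the common refinement.
-/

open Matrix

theorem LinearMap.exists_comp_comp_eq_self {K V W : Type*} [DivisionRing K] [AddCommGroup V]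
    [Module K V] [AddCommGroup W] [Module K W] (f : V →ₗ[K] W) :
    ∃ g : W →ₗ[K] V, f ∘ₗ g ∘ₗ f = f := by
  obtain ⟨h, hh⟩ := f.rangeRestrict.exists_rightInverse_of_surjective f.range_rangeRestrict
  obtain ⟨p, hp⟩ := f.range.subtype.exists_leftInverse_of_injective f.range.ker_subtype
  refine ⟨h ∘ₗ p, LinearMap.ext fun x => ?_⟩
  have hpf : p (f x) = f.rangeRestrict x := LinearMap.congr_fun hp (f.rangeRestrict x)
  simpa [hpf] using congrArg Subtype.val (LinearMap.congr_fun hh (f.rangeRestrict x))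

theorem Matrix.exists_mul_mul_eq_self {K m n : Type*} [Field K] [Fintype m] [Fintype n]
    (M : Matrix m n K) : ∃ G : Matrix n m K, M * G * M = M := by
  classical
  obtain ⟨g, hg⟩ := (toLin' M).exists_comp_comp_eq_self
  refine ⟨LinearMap.toMatrix' g, toLin'.injective ?_⟩
  rwa [toLin'_mul, toLin'_mul, toLin'_toMatrix', LinearMap.comp_assoc]

theorem Matrix.mem_closure_ratCast_ker {m n : Type*} [Fintype m] [Fintype n]
    (M : Matrix m n ℚ) {z : n → ℝ} (hz : M.map (↑) *ᵥ z = 0) :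
    z ∈ closure ((fun u i => (u i : ℝ)) '' {u : n → ℚ | M *ᵥ u = 0}) := by
  classical
  obtain ⟨G, hG⟩ := M.exists_mul_mul_eq_self
  -- `P` maps `ℚⁿ` into the kernel of `M` and fixes the real kernel pointwise.
  set P : Matrix n n ℚ := 1 - G * M
  let f : (n → ℝ) → (n → ℝ) := fun v => P.map (↑) *ᵥ v
  have hfz : f z = z := by
    have hGM := Matrix.map_mul (f := Rat.castHom ℝ) (L := G) (M := M)
    simp only [Rat.coe_castHom] at hGM
    simp [f, P, Matrix.map_sub, hGM, sub_mulVec, ← mulVec_mulVec, hz]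
  have hdense : DenseRange fun (u : n → ℚ) i => (u i : ℝ) :=
    DenseRange.piMap fun _ => Rat.denseRange_cast
  have hf : Continuous f := continuous_const.matrix_mulVec continuous_id
  have := image_closure_subset_closure_image hf (s := Set.range fun (u : n → ℚ) i => (u i : ℝ))
  rw [hdense.closure_range, Set.image_univ] at this
  refine closure_mono ?_ (this ⟨z, hfz⟩)
  rintro _ ⟨_, ⟨q, rfl⟩, rfl⟩
  refine ⟨P *ᵥ q, ?_, funext fun i => (Rat.castHom ℝ).map_mulVec P q i⟩
  simp [P, mulVec_mulVec, Matrix.mul_sub, ← Matrix.mul_assoc, hG]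

theorem exists_pos_int_mul_eq_intCast {n : Type*} [Finite n] (u : n → ℚ) :
    ∃ (d : ℤ) (w : n → ℤ), 0 < d ∧ ∀ i, (w i : ℚ) = d * u i := by
  obtain ⟨b, hb⟩ := IsLocalization.exist_integer_multiples_of_finite (nonZeroDivisors ℤ) u
  choose w hw using hb
  -- `b` may be negative, hence the factor `b * b`
  refine ⟨b * b, fun i => b * w i, mul_self_pos.2 (nonZeroDivisors.coe_ne_zero b), fun i => ?_⟩
  have hwi := hw i
  simp only [algebraMap_int_eq, eq_intCast, zsmul_eq_mul] at hwi
  push_cast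
  rw [hwi, mul_assoc]

theorem Matrix.exists_rat_ker_nonneg_same_zeros {m n : Type*} [Fintype m] [Fintype n]
    (M : Matrix m n ℚ) {z : n → ℝ} (hz : 0 ≤ z) (hMz : M.map (↑) *ᵥ z = 0) :
    ∃ u : n → ℚ, M *ᵥ u = 0 ∧ 0 ≤ u ∧ ∀ i, u i = 0 ↔ z i = 0 := by
  classical
  -- the rows of `D` force a kernel vector to vanish wherever `z` does
  let D : Matrix n n ℚ := diagonal fun i => if z i = 0 then 1 else 0
  have hz' : (fromRows M D).map (↑) *ᵥ z = 0 := by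
    rw [fromRows_map, fromRows_mulVec]
    ext (j | i)
    · exact congrFun hMz j
    · by_cases h : z i = 0 <;> simp [D, mulVec_diagonal, h]
  have hopen : IsOpen ({i | z i ≠ 0}.pi fun _ => Set.Ioi 0 : Set (n → ℝ)) :=
    isOpen_set_pi (Set.toFinite _) fun _ _ => isOpen_Ioi
  obtain ⟨_, hpos, u, hu, rfl⟩ := mem_closure_iff.1 ((fromRows M D).mem_closure_ratCast_ker hz')
    _ hopen fun i hi => (hz i).lt_of_ne' hi
  rw [Set.mem_ofPred_eq, fromRows_mulVec] at hu
  have hu0 : ∀ i, z i = 0 → u i = 0 := fun i hi => by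
    simpa [D, mulVec_diagonal, hi] using congrFun hu (Sum.inr i)
  have hupos : ∀ i, z i ≠ 0 → 0 < u i := fun i hi => Rat.cast_pos.1 (Set.mem_Ioi.1 (hpos i hi))
  refine ⟨u, funext fun j => congrFun hu (Sum.inl j), fun i => ?_, fun i => ⟨fun h => ?_, hu0 i⟩⟩
  · by_cases h : z i = 0
    · exact (hu0 i h).ge
    · exact (hupos i h).le
  · by_contra h'
    exact (hupos i h').ne' h

theorem Matrix.exists_int_ker_nonneg_same_zeros {m n : Type*} [Fintype m] [Fintype n]
    (N : Matrix m n ℤ) {z : n → ℝ} (hz : 0 ≤ z) (hNz : N.map (↑) *ᵥ z = 0) :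
    ∃ w : n → ℤ, N *ᵥ w = 0 ∧ 0 ≤ w ∧ ∀ i, w i = 0 ↔ z i = 0 := by
  obtain ⟨u, hNu, hu, hu0⟩ := (N.map ((↑) : ℤ → ℚ)).exists_rat_ker_nonneg_same_zeros hz
    (by simpa [Matrix.map_map, Function.comp_def] using hNz)
  obtain ⟨d, w, hd, hw⟩ := exists_pos_int_mul_eq_intCast u
  have hd' : (0 : ℚ) < d := Int.cast_pos.2 hd
  refine ⟨w, funext fun j => ?_, fun i => ?_, fun i => ?_⟩
  · have hcast := (Int.castRingHom ℚ).map_mulVec N w j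
    simp only [Int.coe_castRingHom, Function.comp_def] at hcast
    have hwu : (fun i => (w i : ℚ)) = (d : ℚ) • u := funext hw
    rw [hwu, mulVec_smul, hNu, smul_zero, Pi.zero_apply] at hcast
    exact_mod_cast hcast
  · have : (0 : ℚ) ≤ w i := by rw [hw]; exact mul_nonneg hd'.le (hu i)
    exact_mod_cast this
  · rw [← hu0, ← Int.cast_eq_zero (α := ℚ), hw, mul_eq_zero, or_iff_right hd'.ne']

theorem exists_sub_smul_nonneg {𝕜 ι : Type*} [Field 𝕜] [LinearOrder 𝕜] [IsStrictOrderedRing 𝕜]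
    [Fintype ι] (c e : ι → 𝕜) (hc : 0 ≤ c) (he : ∃ i, 0 < e i) :
    ∃ t : 𝕜, 0 ≤ t ∧ 0 ≤ c - t • e ∧ ∃ i, 0 < e i ∧ c i = t * e i := by
  classical
  obtain ⟨i, hi⟩ := he
  obtain ⟨i₀, hi₀, hmin⟩ := Finset.exists_min_image (Finset.univ.filter fun i => 0 < e i)
    (fun i => c i / e i) ⟨i, by simpa using hi⟩
  rw [Finset.mem_filter] at hi₀
  have ht : 0 ≤ c i₀ / e i₀ := div_nonneg (hc i₀) hi₀.2.le
  refine ⟨c i₀ / e i₀, ht, fun j => ?_, i₀, hi₀.2, (div_mul_cancel₀ _ hi₀.2.ne').symm⟩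
  rw [Pi.zero_apply, Pi.sub_apply, Pi.smul_apply, smul_eq_mul, sub_nonneg]
  rcases lt_or_ge 0 (e j) with hj | hj
  · exact (le_div_iff₀ hj).1 (hmin j (by simpa using hj))
  · exact (mul_nonpos_of_nonneg_of_nonpos ht hj).trans (hc j)

theorem Matrix.exists_int_ker_decomposition {m n : Type*} [Fintype m] [Fintype n]
    (N : Matrix m n ℤ) {z : n → ℝ} (hz : 0 ≤ z) (hNz : N.map (↑) *ᵥ z = 0) :
    ∃ (K : ℕ) (w : Fin K → n → ℤ) (β : Fin K → ℝ), (∀ k, N *ᵥ w k = 0 ∧ 0 ≤ w k) ∧ 0 ≤ β ∧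
      z = ∑ k, β k • fun i => (w k i : ℝ) := by
  classical
  induction hcard : (Finset.univ.filter fun i => z i ≠ 0).card using Nat.strong_induction_on
    generalizing z with
  | _ s ih =>
  by_cases hz0 : z = 0
  · exact ⟨0, Fin.elim0, Fin.elim0, fun k => k.elim0, fun k => k.elim0, by simp [hz0]⟩
  obtain ⟨w, hNw, hw, hw0⟩ := N.exists_int_ker_nonneg_same_zeros hz hNz
  have hwpos : ∃ i, 0 < (w i : ℝ) := by
    obtain ⟨i, hi⟩ := Function.ne_iff.1 hz0
    exact ⟨i, Int.cast_pos.2 ((hw i).lt_of_ne' ((hw0 i).not.2 hi))⟩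
  obtain ⟨t, ht, hz', i₀, hi₀, hzi₀⟩ := exists_sub_smul_nonneg z _ hz hwpos
  have hNz' : N.map (↑) *ᵥ (z - t • fun i => (w i : ℝ)) = 0 := by
    have hcast : N.map (↑) *ᵥ (fun i => (w i : ℝ)) = 0 := funext fun j => by
      simpa [hNw, Function.comp_def] using ((Int.castRingHom ℝ).map_mulVec N w j).symm
    rw [mulVec_sub, mulVec_smul, hNz, hcast, smul_zero, sub_zero]
  have hsupp : (Finset.univ.filter fun i => (z - t • fun i => (w i : ℝ)) i ≠ 0) ⊂
      Finset.univ.filter fun i => z i ≠ 0 := by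
    refine Finset.ssubset_iff_of_subset (fun i => ?_) |>.2 ⟨i₀, ?_, ?_⟩
    · simp only [Finset.mem_filter, Finset.mem_univ, true_and]
      intro h hzi
      exact h (by simp [hzi, (hw0 i).2 hzi])
    · simpa [← hw0] using hi₀.ne'
    · simp [hzi₀]
  obtain ⟨K, ws, βs, hws, hβs, hsum⟩ := ih _ (hcard ▸ Finset.card_lt_card hsupp) hz' hNz' rfl
  refine ⟨K + 1, Fin.cons w ws, Fin.cons t βs, Fin.cases ⟨hNw, hw⟩ hws, Fin.cases ht hβs, ?_⟩
  rw [Fin.sum_univ_succ, Fin.cons_zero, Fin.cons_zero]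
  simp only [Fin.cons_succ, ← hsum, add_sub_cancel]

theorem exists_linearIndependent_nonneg_sum_eq {𝕜 V : Type*} [Field 𝕜] [LinearOrder 𝕜]
    [IsStrictOrderedRing 𝕜] [AddCommGroup V] [Module 𝕜 V] {K : ℕ} (g : Fin K → V)
    (c : Fin K → 𝕜) (hc : 0 ≤ c) :
    ∃ (m : ℕ) (e : Fin m → Fin K) (c' : Fin m → 𝕜), 0 ≤ c' ∧ LinearIndependent 𝕜 (g ∘ e) ∧
      ∑ k, c' k • g (e k) = ∑ k, c k • g k := by
  induction K with
  | zero => exact ⟨0, id, c, hc, linearIndependent_empty_type, rfl⟩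
  | succ K ih =>
  by_cases hg : LinearIndependent 𝕜 g
  · exact ⟨_, id, c, hc, hg, rfl⟩
  obtain ⟨a, ha, i, hi⟩ := Fintype.not_linearIndependent_iff.1 hg
  obtain ⟨a, ha, hpos⟩ : ∃ a : Fin (K + 1) → 𝕜, ∑ k, a k • g k = 0 ∧ ∃ k, 0 < a k := by
    rcases hi.lt_or_gt with h | h
    · exact ⟨-a, by simp [neg_smul, ha], i, by simpa using h⟩
    · exact ⟨a, ha, i, h⟩
  obtain ⟨t, -, hc', k₀, -, hk₀⟩ := exists_sub_smul_nonneg c a hc hpos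
  have hsum : ∑ k, (c - t • a) k • g k = ∑ k, c k • g k := by
    simp [sub_smul, Finset.sum_sub_distrib, mul_smul, ← Finset.smul_sum, ha]
  rw [Fin.sum_univ_succAbove _ k₀] at hsum
  obtain ⟨m, e, c'', hc'', hli, hsum'⟩ :=
    ih (g ∘ k₀.succAbove) ((c - t • a) ∘ k₀.succAbove) fun j => hc' _
  refine ⟨m, k₀.succAbove ∘ e, c'', hc'', hli, ?_⟩
  rw [← hsum]
  simpa [hk₀] using hsum'

theorem Matrix.injective_mulVec_of_map {R S m n : Type*} [CommRing R] [CommRing S] [Fintype n]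
    (f : R →+* S) (hf : Function.Injective f) {M : Matrix m n R}
    (h : Function.Injective (M.map f).mulVec) : Function.Injective M.mulVec :=
  fun x y hxy => funext fun i => hf <| congrFun
    (h (a₁ := f ∘ x) (a₂ := f ∘ y) (funext fun j => by rw [← f.map_mulVec, ← f.map_mulVec, hxy])) i

theorem Matrix.exists_int_ker_mulVec_eq {m n : Type*} [Fintype m] [Fintype n]
    (N : Matrix m n ℤ) {z : n → ℝ} (hz : 0 ≤ z) (hNz : N.map (↑) *ᵥ z = 0) :
    ∃ (k : ℕ) (W : Matrix n (Fin k) ℤ) (β : Fin k → ℝ), (∀ i j, 0 ≤ W i j) ∧ N * W = 0 ∧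
      Function.Injective W.mulVec ∧ 0 ≤ β ∧ z = W.map (↑) *ᵥ β := by
  obtain ⟨K, w, β, hw, hβ, rfl⟩ := N.exists_int_ker_decomposition hz hNz
  obtain ⟨k, e, β', hβ', hli, hsum⟩ :=
    exists_linearIndependent_nonneg_sum_eq (fun k i => (w k i : ℝ)) β hβ
  refine ⟨k, of fun i j => w (e j) i, β', fun i j => (hw (e j)).2 i, ?_, ?_, hβ', ?_⟩
  · ext i j
    exact congrFun (hw (e j)).1 i
  · refine injective_mulVec_of_map (Int.castRingHom ℝ) Int.cast_injective ?_
    rw [mulVec_injective_iff]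
    exact hli
  · rw [← hsum]
    ext i
    simp [mulVec, dotProduct, mul_comm]

theorem Matrix.injective_mulVec_of_mul_eq {R κ ι ι' ν : Type*} [CommRing R] [Fintype ι]
    [Fintype ι'] [Fintype ν] {A : Matrix κ ι R} {B : Matrix κ ι' R} {X : Matrix ι ν R}
    {Y : Matrix ι' ν R} (hAB : A * X = B * Y) (hB : Function.Injective B.mulVec)
    (hXY : Function.Injective fun x => (X *ᵥ x, Y *ᵥ x)) : Function.Injective X.mulVec := by
  intro x x' h
  refine hXY (Prod.ext h (hB ?_))
  rw [mulVec_mulVec, mulVec_mulVec, ← hAB, ← mulVec_mulVec, ← mulVec_mulVec, h]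

theorem Matrix.exists_int_mul_eq_mul {κ ι ι' : Type*} [Fintype κ] [Fintype ι] [Fintype ι']
    (A : Matrix κ ι ℤ) (B : Matrix κ ι' ℤ) (hA : Function.Injective A.mulVec)
    (hB : Function.Injective B.mulVec) {a : ι → ℝ} {b : ι' → ℝ} (ha : 0 ≤ a) (hb : 0 ≤ b)
    (hab : A.map (↑) *ᵥ a = B.map (↑) *ᵥ b) :
    ∃ (k : ℕ) (X : Matrix ι (Fin k) ℤ) (Y : Matrix ι' (Fin k) ℤ) (β : Fin k → ℝ),
      (∀ i j, 0 ≤ X i j) ∧ (∀ i j, 0 ≤ Y i j) ∧ A * X = B * Y ∧ Function.Injective X.mulVec ∧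
      Function.Injective Y.mulVec ∧ 0 ≤ β ∧ a = X.map (↑) *ᵥ β ∧ b = Y.map (↑) *ᵥ β := by
  obtain ⟨k, W, β, hW, hNW, hWinj, hβ, hz⟩ := (fromCols A (-B)).exists_int_ker_mulVec_eq
    (z := Sum.elim a b) (fun i => by cases i; exacts [ha _, hb _])
    (by simp [fromCols_map, fromCols_mulVec, Function.comp_def, Matrix.map_neg, neg_mulVec, hab])
  rw [← fromRows_toRows W, fromCols_mul_fromRows, Matrix.neg_mul, add_neg_eq_zero] at hNW
  have hXY : Function.Injective fun x => (W.toRows₁ *ᵥ x, W.toRows₂ *ᵥ x) :=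
    fun x x' h => hWinj <| by
      rw [← fromRows_toRows W, fromRows_mulVec, fromRows_mulVec]
      simp only [Prod.mk.injEq] at h
      rw [h.1, h.2]
  refine ⟨k, W.toRows₁, W.toRows₂, β, fun i => hW _, fun i => hW _, hNW,
    injective_mulVec_of_mul_eq hNW hB hXY,
    injective_mulVec_of_mul_eq hNW.symm hA (Prod.swap_injective.comp hXY), hβ,
    funext fun i => congrFun hz (.inl i), funext fun i => congrFun hz (.inr i)⟩

lemma homMatrix_id (a : ConeCat) : homMatrix (𝟙 a) = 1 := rfl

lemma homMatrix_comp {a b c : ConeCat} (φ : a ⟶ b) (ψ : b ⟶ c) :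
    homMatrix (φ ≫ ψ) = homMatrix ψ * homMatrix φ := rfl

lemma homMatrix_nonneg {a b : ConeCat} (φ : a ⟶ b) (i : Fin b.n) (j : Fin a.n) :
    0 ≤ homMatrix φ i j := φ.2.1 i j

lemma homMatrix_injective {a b : ConeCat} (φ : a ⟶ b) :
    Function.Injective (homMatrix φ).mulVec := φ.2.2

lemma homMatrix_mulVec_nonneg {a b : ConeCat} (φ : a ⟶ b) {y : Fin a.n → ℝ} (hy : 0 ≤ y) :
    0 ≤ (homMatrix φ).map (↑) *ᵥ y := fun j =>
  show 0 ≤ ∑ i, (homMatrix φ j i : ℝ) * y i from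
    Finset.sum_nonneg fun i _ => mul_nonneg (Int.cast_nonneg (homMatrix_nonneg φ j i)) (hy i)

lemma homMatrix_mulVec_ne_zero {a b : ConeCat} (φ : a ⟶ b) {y : Fin a.n → ℝ} (hy : 0 ≤ y)
    (hy0 : y ≠ 0) : (homMatrix φ).map (↑) *ᵥ y ≠ 0 := by
  obtain ⟨i, hi⟩ := Function.ne_iff.1 hy0
  obtain ⟨j, hj⟩ : ∃ j, homMatrix φ j i ≠ 0 := by
    by_contra! h
    have := homMatrix_injective φ (a₁ := Pi.single i 1) (a₂ := 0) (by ext j; simp [h])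
    simpa using congrFun this i
  have hpos : 0 < ((homMatrix φ).map (↑) *ᵥ y) j :=
    calc 0 < (homMatrix φ j i : ℝ) * y i :=
          mul_pos (Int.cast_pos.2 ((homMatrix_nonneg φ j i).lt_of_ne' hj)) ((hy i).lt_of_ne' hi)
      _ ≤ ((homMatrix φ).map (↑) *ᵥ y) j :=
          Finset.single_le_sum (f := fun l => (homMatrix φ j l : ℝ) * y l)
            (fun l _ => mul_nonneg (Int.cast_nonneg (homMatrix_nonneg φ j l)) (hy l))
            (Finset.mem_univ i)
  exact fun h => hpos.ne' (congrFun h j)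

lemma stdSimplex'_val_ne_zero {n : ℕ} (y : stdSimplex' n) : y.val ≠ 0 := fun h => by
  simpa [h] using y.2.2

lemma stdSimplex'_pos {n : ℕ} (y : stdSimplex' n) : 0 < n :=
  Nat.pos_of_ne_zero fun h => by subst h; simpa using y.2.2

lemma exists_pos_smul_stdSimplex' {n : ℕ} {v : Fin n → ℝ} (hv : 0 ≤ v) (hv0 : v ≠ 0) :
    ∃ c : ℝ, 0 < c ∧ ∃ u : stdSimplex' n, v = c • u.val := by
  have hc : 0 < ∑ i, v i := by
    obtain ⟨i, hi⟩ := Function.ne_iff.1 hv0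
    exact Finset.sum_pos' (fun i _ => hv i) ⟨i, Finset.mem_univ i, (hv i).lt_of_ne' hi⟩
  refine ⟨_, hc, ⟨(∑ i, v i)⁻¹ • v, fun i => smul_nonneg (inv_nonneg.2 hc.le) (hv i), ?_⟩, ?_⟩
  · simp [← Finset.mul_sum, inv_mul_cancel₀ hc.ne']
  · rw [smul_inv_smul₀ hc.ne']

/-- The map `Δ^{a-1} → Δ^{b-1}` induced by `φ` sends `y` to `w`. -/
def InducedMapsTo {a b : ConeCat} (φ : a ⟶ b) (y : stdSimplex' a.n) (w : stdSimplex' b.n) :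
    Prop :=
  ∃ c : ℝ, 0 < c ∧ w.val = c • ((homMatrix φ).map (↑) *ᵥ y.val)

lemma inducedMapsTo_id {a : ConeCat} (y : stdSimplex' a.n) : InducedMapsTo (𝟙 a) y y :=
  ⟨1, one_pos, by simp [homMatrix_id]⟩

lemma InducedMapsTo.comp {a b c : ConeCat} {φ : a ⟶ b} {ψ : b ⟶ c} {y : stdSimplex' a.n}
    {w : stdSimplex' b.n} {v : stdSimplex' c.n} (hφ : InducedMapsTo φ y w)
    (hψ : InducedMapsTo ψ w v) : InducedMapsTo (φ ≫ ψ) y v := by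
  obtain ⟨c₁, hc₁, hw⟩ := hφ
  obtain ⟨c₂, hc₂, hv⟩ := hψ
  have hmap := Matrix.map_mul (f := Int.castRingHom ℝ) (L := homMatrix ψ) (M := homMatrix φ)
  simp only [Int.coe_castRingHom] at hmap
  refine ⟨c₂ * c₁, mul_pos hc₂ hc₁, ?_⟩
  rw [hv, hw, homMatrix_comp, hmap, mulVec_smul, smul_smul, mulVec_mulVec]

lemma exists_inducedMapsTo {a b : ConeCat} (φ : a ⟶ b) (y : stdSimplex' a.n) :
    ∃ w, InducedMapsTo φ y w := by
  obtain ⟨c, hc, w, hw⟩ := exists_pos_smul_stdSimplex' (homMatrix_mulVec_nonneg φ y.2.1)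
    (homMatrix_mulVec_ne_zero φ y.2.1 (stdSimplex'_val_ne_zero y))
  exact ⟨w, c⁻¹, inv_pos.2 hc, by rw [hw, inv_smul_smul₀ hc.ne']⟩

lemma exists_comm_inducedMapsTo {m r q : ConeCat} (φ : m ⟶ q) (ψ : r ⟶ q)
    {y : stdSimplex' m.n} {v : stdSimplex' r.n} {w : stdSimplex' q.n}
    (hy : InducedMapsTo φ y w) (hv : InducedMapsTo ψ v w) :
    ∃ (s : ConeCat) (χ₀ : s ⟶ m) (χ₁ : s ⟶ r) (u : stdSimplex' s.n),
      χ₀ ≫ φ = χ₁ ≫ ψ ∧ InducedMapsTo χ₀ u y ∧ InducedMapsTo χ₁ u v := by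
  obtain ⟨c₀, hc₀, hw₀⟩ := hy
  obtain ⟨c₁, hc₁, hw₁⟩ := hv
  obtain ⟨k, X, Y, β, hX, hY, hXY, hXinj, hYinj, hβ, hXβ, hYβ⟩ :=
    exists_int_mul_eq_mul (homMatrix φ) (homMatrix ψ) (homMatrix_injective φ)
      (homMatrix_injective ψ) (smul_nonneg hc₀.le y.2.1) (smul_nonneg hc₁.le v.2.1)
      (by rw [mulVec_smul, mulVec_smul, ← hw₀, ← hw₁])
  have hβ0 : β ≠ 0 := by
    rintro rfl
    rw [mulVec_zero, smul_eq_zero] at hXβ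
    exact hXβ.elim hc₀.ne' (stdSimplex'_val_ne_zero y)
  obtain ⟨c, hc, u, rfl⟩ := exists_pos_smul_stdSimplex' hβ hβ0
  rw [mulVec_smul] at hXβ hYβ
  refine ⟨⟨k, stdSimplex'_pos u⟩, ⟨X, hX, hXinj⟩, ⟨Y, hY, hYinj⟩, u, Subtype.ext hXY,
    ⟨c / c₀, div_pos hc hc₀, ?_⟩, ⟨c / c₁, div_pos hc hc₁, ?_⟩⟩
  · change y.val = (c / c₀) • (X.map (↑) *ᵥ u.val)
    rw [div_eq_inv_mul, mul_smul, ← hXβ, inv_smul_smul₀ hc₀.ne']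
  · change v.val = (c / c₁) • (Y.map (↑) *ᵥ u.val)
    rw [div_eq_inv_mul, mul_smul, ← hYβ, inv_smul_smul₀ hc₁.ne']

def HasCommonRefinement (F : ConeCatᵒᵖ ⥤ Type) (p q : SimpPt F) : Prop :=
  ∃ (m : ConeCat) (φ₀ : m ⟶ p.1) (φ₁ : m ⟶ q.1) (y : stdSimplex' m.n),
    F.map φ₀.op p.2.1 = F.map φ₁.op q.2.1 ∧ InducedMapsTo φ₀ y p.2.2 ∧ InducedMapsTo φ₁ y q.2.2

namespace HasCommonRefinement

variable {F : ConeCatᵒᵖ ⥤ Type}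

lemma refl (p : SimpPt F) : HasCommonRefinement F p p :=
  ⟨p.1, 𝟙 _, 𝟙 _, p.2.2, rfl, inducedMapsTo_id _, inducedMapsTo_id _⟩

lemma symm {p q : SimpPt F} : HasCommonRefinement F p q → HasCommonRefinement F q p
  | ⟨m, φ₀, φ₁, y, hξ, h₀, h₁⟩ => ⟨m, φ₁, φ₀, y, hξ.symm, h₁, h₀⟩

lemma of_simpRel {p q : SimpPt F} : simpRel F p q → HasCommonRefinement F p q
  | ⟨φ, hξ, c, hc, hw⟩ =>
    ⟨p.1, 𝟙 _, φ, p.2.2, by simp [hξ], inducedMapsTo_id _, c, hc, funext hw⟩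

lemma trans {p q r : SimpPt F} : HasCommonRefinement F p q → HasCommonRefinement F q r →
    HasCommonRefinement F p r
  | ⟨_, φ₀, φ₁, y, hξ, h₀, h₁⟩, ⟨_, ψ₀, ψ₁, v, hξ', h₀', h₁'⟩ => by
    obtain ⟨s, χ₀, χ₁, u, hχ, hu₀, hu₁⟩ := exists_comm_inducedMapsTo φ₁ ψ₀ h₁ h₀'
    refine ⟨s, χ₀ ≫ φ₀, χ₁ ≫ ψ₁, u, ?_, hu₀.comp h₀, hu₁.comp h₁'⟩
    simp only [op_comp, Functor.map_comp_apply, hξ, ← hξ']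
    rw [← Functor.map_comp_apply, ← Functor.map_comp_apply, ← op_comp, ← op_comp, hχ]

lemma of_eqvGen {p q : SimpPt F} (h : Relation.EqvGen (simpRel F) p q) :
    HasCommonRefinement F p q :=
  (Equivalence.eqvGen_iff ⟨refl, symm, trans⟩).1 (h.mono fun _ _ => of_simpRel)

end HasCommonRefinement

lemma mk_eq_mk_of_inducedMapsTo {F : ConeCatᵒᵖ ⥤ Type} {m n : ConeCat} (φ : m ⟶ n)
    {ξ : F.obj (Opposite.op n)} {y : stdSimplex' m.n} {w : stdSimplex' n.n}
    (h : InducedMapsTo φ y w) :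
    Quot.mk (simpRel F) ⟨m, F.map φ.op ξ, y⟩ = Quot.mk (simpRel F) ⟨n, ξ, w⟩ :=
  let ⟨c, hc, hw⟩ := h
  Quot.sound ⟨φ, rfl, c, hc, congrFun hw⟩

/-- If a point `x` of the projective realization `P(F)` of a formal fan lies in the images
of two rational simplices `ξ₀(Δ^{n₀−1})` and `ξ₁(Δ^{n₁−1})`, then there are `m`, `ξ ∈ F_m`
and morphisms `φᵢ : [m] → [nᵢ]` with `φᵢ*(ξᵢ) = ξ` such that `x` lies in the image of the
rational simplex `ξ(Δ^{m−1})`, which is contained in both `ξ₀(Δ^{n₀−1})` and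
`ξ₁(Δ^{n₁−1})`. -/
theorem point_in_two_rational_simplices (F : ConeCatᵒᵖ ⥤ Type)
    (n₀ n₁ : ConeCat) (ξ₀ : F.obj (Opposite.op n₀)) (ξ₁ : F.obj (Opposite.op n₁))
    (x : ProjReal F) (y₀ : stdSimplex' n₀.n) (y₁ : stdSimplex' n₁.n)
    (h₀ : x = Quot.mk (simpRel F) ⟨n₀, ξ₀, y₀⟩)
    (h₁ : x = Quot.mk (simpRel F) ⟨n₁, ξ₁, y₁⟩) :
    ∃ (m : ConeCat) (ξ : F.obj (Opposite.op m)) (φ₀ : m ⟶ n₀) (φ₁ : m ⟶ n₁),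
      F.map φ₀.op ξ₀ = ξ ∧ F.map φ₁.op ξ₁ = ξ ∧
      (∃ y : stdSimplex' m.n, x = Quot.mk (simpRel F) ⟨m, ξ, y⟩) ∧
      (∀ z : stdSimplex' m.n, ∃ w : stdSimplex' n₀.n,
        Quot.mk (simpRel F) ⟨m, ξ, z⟩ = Quot.mk (simpRel F) ⟨n₀, ξ₀, w⟩) ∧
      (∀ z : stdSimplex' m.n, ∃ w : stdSimplex' n₁.n,
        Quot.mk (simpRel F) ⟨m, ξ, z⟩ = Quot.mk (simpRel F) ⟨n₁, ξ₁, w⟩) := by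
  obtain ⟨m, φ₀, φ₁, y, hξ, hy₀, -⟩ :=
    HasCommonRefinement.of_eqvGen (Quot.eqvGen_exact (h₀.symm.trans h₁))
  refine ⟨m, _, φ₀, φ₁, rfl, hξ.symm, ⟨y, h₀.trans (mk_eq_mk_of_inducedMapsTo φ₀ hy₀).symm⟩,
    fun z => ?_, fun z => ?_⟩
  · obtain ⟨w, hw⟩ := exists_inducedMapsTo φ₀ z
    exact ⟨w, mk_eq_mk_of_inducedMapsTo φ₀ hw⟩
  · obtain ⟨w, hw⟩ := exists_inducedMapsTo φ₁ z
    exact ⟨w, hξ ▸ mk_eq_mk_of_inducedMapsTo φ₁ hw⟩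
end

section
/- Let 𝒜 be an abelian category with a central charge Z, and let 𝒯 be the class of torsion objects, 𝒯 = {E : Im Z(E) = 0}. Then 𝒯 is closed under subobjects, quotient objects, and extensions (if 0 → A → B → C → 0 is exact, then B ∈ 𝒯 if and only if A ∈ 𝒯 and C ∈ 𝒯). If moreover 𝒜 is noetherian (every ascending chain of subobjects of any object stabilizes), then every object E has a largest torsion subobject E_tor: a subobject lying in 𝒯 that contains every subobject of E lying in 𝒯, and the quotient E/E_tor has no nonzero torsion subobjects. -/
open CategoryTheory CategoryTheory.Limits

universe v u

/-- For an abelian category `C` with a central charge `Z` (additive on short exact sequences,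
with values in the semi-closed upper half plane `ℍ ∪ ℝ_{≤0}`), the class of torsion objects
`𝒯 = {E | Im Z(E) = 0}` is closed under subobjects, quotients and extensions; and if `C` is
noetherian (ascending chains of subobjects stabilize), every object `E` has a largest torsion
subobject `T ⊆ E` whose quotient `E/T` has no nonzero torsion subobjects. -/
theorem torsion_class_and_maximal_torsion_subobject
    {C : Type u} [Category.{v} C] [Abelian C] (Z : C → ℂ)
    (hadd : ∀ S : ShortComplex C, S.ShortExact → Z S.X₂ = Z S.X₁ + Z S.X₃)
    (him : ∀ E : C, 0 ≤ (Z E).im)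
    (hre : ∀ E : C, (Z E).im = 0 → (Z E).re ≤ 0) :
    (∀ (A B : C) (f : A ⟶ B), Mono f → (Z B).im = 0 → (Z A).im = 0) ∧
    (∀ (A B : C) (f : A ⟶ B), Epi f → (Z A).im = 0 → (Z B).im = 0) ∧
    (∀ S : ShortComplex C, S.ShortExact →
      ((Z S.X₂).im = 0 ↔ (Z S.X₁).im = 0 ∧ (Z S.X₃).im = 0)) ∧
    ((∀ X : C, WellFoundedGT (Subobject X)) →
      ∀ E : C, ∃ T : Subobject E,
        (Z ((T : C))).im = 0 ∧
        (∀ S : Subobject E, (Z ((S : C))).im = 0 → S ≤ T) ∧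
        (∀ S : Subobject (cokernel T.arrow), (Z ((S : C))).im = 0 → S = ⊥)) := by
  -- torsion is closed under subobjects
  have tormono : ∀ (A B : C) (f : A ⟶ B), Mono f → (Z B).im = 0 → (Z A).im = 0 := by
    intro A B f hf hB
    have : Mono f := hf
    have hse : (ShortComplex.mk f (cokernel.π f) (cokernel.condition f)).ShortExact :=
      { exact := ShortComplex.exact_cokernel f }
    have h := congrArg Complex.im (hadd _ hse)
    simp only [Complex.add_im] at h
    have h1 := him A
    have h2 := him (cokernel f)
    rw [hB] at h
    linarith
  -- torsion is closed under quotients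
  have torepi : ∀ (A B : C) (f : A ⟶ B), Epi f → (Z A).im = 0 → (Z B).im = 0 := by
    intro A B f hf hA
    have : Epi f := hf
    have hse : (ShortComplex.mk (kernel.ι f) f (kernel.condition f)).ShortExact :=
      { exact := ShortComplex.exact_kernel f }
    have h := congrArg Complex.im (hadd _ hse)
    simp only [Complex.add_im] at h
    have h1 := him (kernel f)
    have h2 := him B
    rw [hA] at h
    linarith
  -- torsion transfers along isomorphisms
  have toriso : ∀ {A B : C} (e : A ≅ B), (Z A).im = 0 → (Z B).im = 0 := by
    intro A B e hA
    exact torepi A B e.hom inferInstance hA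
  -- torsion is closed under extensions
  have torext : ∀ S : ShortComplex C, S.ShortExact →
      ((Z S.X₂).im = 0 ↔ (Z S.X₁).im = 0 ∧ (Z S.X₃).im = 0) := by
    intro S hS
    have h := congrArg Complex.im (hadd S hS)
    simp only [Complex.add_im] at h
    have h1 := him S.X₁
    have h3 := him S.X₃
    constructor
    · intro h2
      rw [h2] at h
      constructor <;> linarith
    · rintro ⟨h1', h3'⟩
      rw [h, h1', h3']
      ring
  refine ⟨tormono, torepi, torext, ?_⟩
  intro hw E
  -- the bottom subobject is torsion
  have hbot : (Z (((⊥ : Subobject E) : C))).im = 0 := by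
    have hz : IsZero (((⊥ : Subobject E) : C)) :=
      (isZero_zero C).of_iso Subobject.botCoeIsoZero
    have hse : (ShortComplex.mk (𝟙 (((⊥ : Subobject E) : C))) (𝟙 _)
        (by rw [Category.comp_id]; exact hz.eq_of_src _ _)).ShortExact :=
      { exact := ShortComplex.exact_of_isZero_X₂ _ hz }
    have h := congrArg Complex.im (hadd _ hse)
    simp only [Complex.add_im] at h
    linarith
  -- pick a maximal torsion subobject T
  obtain ⟨T, hT, hmax⟩ := (hw E).wf.has_min
    {S : Subobject E | (Z ((S : C))).im = 0} ⟨⊥, hbot⟩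
  -- the biproduct of two torsion objects is torsion
  have torbiprod : ∀ (A B : C), (Z A).im = 0 → (Z B).im = 0 → (Z (A ⊞ B)).im = 0 := by
    intro A B hA hB
    have hsp : (ShortComplex.mk (biprod.inl : A ⟶ A ⊞ B) (biprod.snd : A ⊞ B ⟶ B)
        biprod.inl_snd).Splitting :=
      { r := biprod.fst
        s := biprod.inr
        f_r := biprod.inl_fst
        s_g := biprod.inr_snd
        id := biprod.total }
    have h := congrArg Complex.im (hadd _ hsp.shortExact)
    simp only [Complex.add_im] at h
    rw [h, hA, hB]; ring
  -- T is the largest torsion subobject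
  have hle : ∀ S : Subobject E, (Z ((S : C))).im = 0 → S ≤ T := by
    intro S hS
    set h : ((S : C)) ⊞ ((T : C)) ⟶ E := biprod.desc S.arrow T.arrow with hh
    have hUtor : (Z ((Subobject.mk (image.ι h) : C))).im = 0 := by
      refine toriso (Subobject.underlyingIso (image.ι h)).symm ?_
      exact torepi _ _ (factorThruImage h) inferInstance (torbiprod _ _ hS hT)
    have hTU : T ≤ Subobject.mk (image.ι h) :=
      Subobject.le_mk_of_comm (biprod.inr ≫ factorThruImage h) (by simp [hh])
    have hSU : S ≤ Subobject.mk (image.ι h) :=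
      Subobject.le_mk_of_comm (biprod.inl ≫ factorThruImage h) (by simp [hh])
    have : Subobject.mk (image.ι h) = T := by
      rcases lt_or_eq_of_le hTU with hlt | heq
      · exact absurd hlt (hmax _ hUtor)
      · exact heq.symm
    rwa [this] at hSU
  refine ⟨T, hT, hle, ?_⟩
  -- the quotient has no nonzero torsion subobjects
  intro S hS
  set π : E ⟶ cokernel T.arrow := cokernel.π T.arrow with hπ
  set fst := pullback.fst S.arrow π with hfst
  set snd := pullback.snd S.arrow π with hsnd
  haveI : Epi fst := Abelian.epi_pullback_of_epi_g _ _
  have hk0 : (0 : ((T : C)) ⟶ ((S : C))) ≫ S.arrow = T.arrow ≫ π := by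
    simp [hπ]
  set k : ((T : C)) ⟶ pullback S.arrow π := pullback.lift 0 T.arrow hk0 with hk
  have hks : k ≫ snd = T.arrow := pullback.lift_snd _ _ _
  have hkf : k ≫ fst = 0 := pullback.lift_fst _ _ _
  haveI : Mono k := by
    have : Mono (k ≫ snd) := by rw [hks]; infer_instance
    exact mono_of_mono k snd
  -- k is a kernel of fst
  have isKer : IsLimit (KernelFork.ofι k hkf) := by
    refine KernelFork.IsLimit.ofι k hkf
      (fun {W} a ha => Abelian.monoLift T.arrow (a ≫ snd) ?_) (fun {W} a ha => ?_)
      (fun {W} a ha m hm => ?_)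
    · rw [Category.assoc, ← pullback.condition, ← Category.assoc, ha, zero_comp]
    · apply pullback.hom_ext
      · rw [Category.assoc, hkf, comp_zero, ha]
      · rw [Category.assoc, hks, Abelian.monoLift_comp]
    · rw [← cancel_mono k, hm]
      apply pullback.hom_ext
      · rw [Category.assoc, hkf, comp_zero, ha]
      · rw [Category.assoc, hks, Abelian.monoLift_comp]
  have hse : (ShortComplex.mk k fst hkf).ShortExact :=
    { exact := ShortComplex.exact_of_f_is_kernel _ isKer }
  have hPtor : (Z (pullback S.arrow π)).im = 0 := by
    have h := congrArg Complex.im (hadd _ hse)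
    simp only [Complex.add_im] at h
    rw [h, hT, hS]; ring
  haveI : Mono snd := inferInstance
  -- the pullback, as a subobject of E, is torsion, hence ≤ T
  have hVT : Subobject.mk snd ≤ T := by
    apply hle
    exact toriso (Subobject.underlyingIso snd).symm hPtor
  have hfac : Subobject.ofMkLE snd T hVT ≫ T.arrow = snd := Subobject.ofMkLE_arrow hVT
  have hsndπ : snd ≫ π = 0 := by
    rw [← hfac, Category.assoc, show T.arrow ≫ π = 0 from cokernel.condition _, comp_zero]
  have hSarrow : S.arrow = 0 := by
    rw [← cancel_epi fst, comp_zero, pullback.condition, hsndπ]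
  have : S ≤ ⊥ := Subobject.le_of_comm (0 : ((S : C)) ⟶ (((⊥ : Subobject (cokernel T.arrow)) : C)))
    (by simp [hSarrow])
  exact le_bot_iff.mp this
end

section
/- Let 𝒜 be an abelian category with a central charge Z and let ε ∈ (0,1]. (i) For every T ∈ 𝒫([ε,1]) and every F ∈ 𝒫((0,ε)), Hom(T, F) = 0. (ii) If moreover (𝒜, Z) has the Harder–Narasimhan property, then every object E fits into a short exact sequence 0 → E′ → E → E″ → 0 with E′ ∈ 𝒫([ε,1]) and E″ ∈ 𝒫((0,ε)); that is, (𝒫([ε,1]), 𝒫((0,ε))) is a torsion theory on 𝒜. -/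
/-!
A nonzero morphism `T ⟶ F` between semistable objects factors as `T ↠ coim f ↪ F`; by
semistability of `F` the image has phase at most `φ(F)`, and by the see-saw property of the
additive central charge the quotient `coim f` of `T` has phase at least `φ(T)`. Hence
`φ(T) ≤ φ(F)`, and the vanishing of `Hom(𝒫([ε,1]), 𝒫((0,ε)))` follows by induction on the
extensions building both classes. For (ii), cut the Harder–Narasimhan filtration of `E` at the
first step whose factor has phase `≥ ε`: the subobject is an iterated extension of the factors
of phase `≥ ε`, the quotient one of the factors of phase `< ε`.
-/

open CategoryTheory CategoryTheory.Limits

universe v u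

/-- The phase `φ(z) ∈ (0,1]` of a complex number in `ℍ ∪ ℝ_{≤0}`, defined by
`z = |z| exp(iπφ(z))` for `z ≠ 0`, and `φ(0) := 1`. -/
noncomputable def phase (z : ℂ) : ℝ := if z = 0 then 1 else z.arg / Real.pi

/-- An object `E` is semistable for the central charge `Z` if `φ(F) ≤ φ(E)`
for every nonzero subobject `F ⊆ E`. -/
def Semistable {C : Type u} [Category.{v} C] [Abelian C] (Z : C → ℂ) (E : C) : Prop :=
  ∀ S : Subobject E, S ≠ ⊥ → phase (Z ((S : C))) ≤ phase (Z E)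

/-- `𝒫(I)`: the smallest class of objects containing the zero objects and the semistable
objects of phase in `I`, and closed under extensions. -/
inductive PhaseClass {C : Type u} [Category.{v} C] [Abelian C] (Z : C → ℂ) (I : Set ℝ) :
    C → Prop
  | zero (E : C) (h : IsZero E) : PhaseClass Z I E
  | of_semistable (E : C) (h0 : ¬IsZero E) (hs : Semistable Z E)
      (hφ : phase (Z E) ∈ I) : PhaseClass Z I E
  | ext (S : ShortComplex C) (hS : S.ShortExact) (h1 : PhaseClass Z I S.X₁)
      (h3 : PhaseClass Z I S.X₃) : PhaseClass Z I S.X₂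

/-- The subquotient `S/T` of an object `E` attached to nested subobjects `T ≤ S ≤ E`. -/
noncomputable def subquot {C : Type u} [Category.{v} C] [Abelian C] {E : C}
    {T S : Subobject E} (h : T ≤ S) : C :=
  cokernel (Subobject.ofLE T S h)

/-- `(𝒜, Z)` has the Harder–Narasimhan property: every nonzero object admits a finite
filtration by subobjects with nonzero semistable subquotients of strictly increasing phase. -/
def HasHNProp {C : Type u} [Category.{v} C] [Abelian C] (Z : C → ℂ) : Prop :=
  ∀ E : C, ¬IsZero E →
    ∃ (p : ℕ) (_ : 0 < p) (c : Fin (p + 1) → Subobject E)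
      (hm : ∀ j : Fin p, c j.succ ≤ c j.castSucc),
      c 0 = ⊤ ∧ c (Fin.last p) = ⊥ ∧
      (∀ j : Fin p, ¬IsZero (subquot (hm j)) ∧ Semistable Z (subquot (hm j))) ∧
      StrictMono fun j : Fin p => phase (Z (subquot (hm j)))

def phaseDomain : Set ℂ := {z | 0 ≤ z.im ∧ (z.im = 0 → z.re ≤ 0)}

lemma arg_mem_Ioc_of_mem_phaseDomain {z : ℂ} (hz : z ∈ phaseDomain) (h0 : z ≠ 0) :
    z.arg ∈ Set.Ioc 0 Real.pi := by
  refine ⟨(Complex.arg_nonneg_iff.2 hz.1).lt_of_ne fun h => h0 ?_, Complex.arg_le_pi z⟩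
  obtain ⟨hre, him⟩ := Complex.arg_eq_zero_iff.1 h.symm
  exact Complex.ext (le_antisymm (hz.2 him) hre) him

lemma phase_mem_Ioc_of_mem_phaseDomain {z : ℂ} (hz : z ∈ phaseDomain) :
    phase z ∈ Set.Ioc 0 1 := by
  by_cases h0 : z = 0
  · simp [phase, h0]
  obtain ⟨h1, h2⟩ := arg_mem_Ioc_of_mem_phaseDomain hz h0
  rw [phase, if_neg h0]
  exact ⟨div_pos h1 Real.pi_pos, (div_le_one Real.pi_pos).2 h2⟩

lemma add_mem_phaseDomain {a b : ℂ} (ha : a ∈ phaseDomain) (hb : b ∈ phaseDomain) :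
    a + b ∈ phaseDomain := by
  refine ⟨by simpa using add_nonneg ha.1 hb.1, fun h => ?_⟩
  rw [Complex.add_im] at h
  have ha0 : a.im = 0 := by linarith [ha.1, hb.1]
  have hb0 : b.im = 0 := by linarith [ha.1, hb.1]
  simpa using add_nonpos (ha.2 ha0) (hb.2 hb0)

lemma eq_zero_of_add_eq_zero_of_mem_phaseDomain {a b : ℂ} (ha : a ∈ phaseDomain)
    (hb : b ∈ phaseDomain) (hab : a + b = 0) : a = 0 := by
  have him := congrArg Complex.im hab
  have hre := congrArg Complex.re hab
  simp only [Complex.add_im, Complex.add_re, Complex.zero_im, Complex.zero_re] at him hre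
  have ha0 : a.im = 0 := by linarith [ha.1, hb.1]
  have hb0 : b.im = 0 := by linarith [ha.1, hb.1]
  exact Complex.ext (by rw [Complex.zero_re]; linarith [ha.2 ha0, hb.2 hb0]) ha0

/-- The right-hand side is `‖z‖ ‖w‖ sin (arg w - arg z)`, and both arguments lie in
`(0, π]`. -/
lemma phase_le_phase_iff {z w : ℂ} (hz : z ∈ phaseDomain) (hw : w ∈ phaseDomain)
    (hz0 : z ≠ 0) (hw0 : w ≠ 0) :
    phase z ≤ phase w ↔ 0 ≤ z.re * w.im - z.im * w.re := by
  obtain ⟨hza, hzb⟩ := arg_mem_Ioc_of_mem_phaseDomain hz hz0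
  obtain ⟨hwa, hwb⟩ := arg_mem_Ioc_of_mem_phaseDomain hw hw0
  have hnorm : 0 < ‖z‖ * ‖w‖ := mul_pos (norm_pos_iff.2 hz0) (norm_pos_iff.2 hw0)
  have hcross : z.re * w.im - z.im * w.re = ‖z‖ * ‖w‖ * Real.sin (w.arg - z.arg) := by
    rw [Real.sin_sub, ← Complex.norm_mul_cos_arg z, ← Complex.norm_mul_sin_arg z,
      ← Complex.norm_mul_cos_arg w, ← Complex.norm_mul_sin_arg w]
    ring
  rw [phase, phase, if_neg hz0, if_neg hw0, div_le_div_iff_of_pos_right Real.pi_pos, hcross]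
  constructor
  · intro h
    exact mul_nonneg hnorm.le (Real.sin_nonneg_of_nonneg_of_le_pi (by linarith) (by linarith))
  · intro h
    by_contra hlt
    have hs : Real.sin (w.arg - z.arg) < 0 :=
      Real.sin_neg_of_neg_of_neg_pi_lt (by linarith) (by linarith)
    nlinarith

lemma phase_add_le_of_phase_le_phase_add {a b : ℂ} (ha : a ∈ phaseDomain)
    (hb : b ∈ phaseDomain) (h : phase a ≤ phase (a + b)) : phase (a + b) ≤ phase b := by
  by_cases ha0 : a = 0
  · rw [ha0, zero_add]
  by_cases hb0 : b = 0
  · rw [hb0, add_zero]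
    simpa [phase] using (phase_mem_Ioc_of_mem_phaseDomain ha).2
  have hab := add_mem_phaseDomain ha hb
  have hab0 : a + b ≠ 0 := fun h => ha0 (eq_zero_of_add_eq_zero_of_mem_phaseDomain ha hb h)
  rw [phase_le_phase_iff ha hab ha0 hab0] at h
  rw [phase_le_phase_iff hab hb hab0 hb0]
  -- the cross product is bilinear and alternating: `a × (a + b) = a × b = (a + b) × b`
  simp only [Complex.add_re, Complex.add_im] at h ⊢
  linarith

variable {C : Type u} [Category.{v} C] [Abelian C]

structure IsCentralCharge (Z : C → ℂ) : Prop where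
  additive : ∀ S : ShortComplex C, S.ShortExact → Z S.X₂ = Z S.X₁ + Z S.X₃
  mem_phaseDomain : ∀ E : C, Z E ∈ phaseDomain

lemma shortExact_cokernel {X Y : C} (i : X ⟶ Y) [Mono i] :
    (ShortComplex.mk i (cokernel.π i) (cokernel.condition i)).ShortExact :=
  { exact := ShortComplex.exact_cokernel i }

/-- `0 → coker f → coker (f ≫ g) → coker g → 0`: part of the kernel–cokernel exact sequence
of `f ≫ g`, in which `ker g = 0`. -/
lemma shortExact_cokernel_map_comp {X Y W : C} (f : X ⟶ Y) (g : Y ⟶ W) [Mono g] :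
    (ShortComplex.mk (cokernel.map f (f ≫ g) (𝟙 _) g (by simp))
      (cokernel.map (f ≫ g) g f (𝟙 _) (by simp)) (by ext; simp)).ShortExact := by
  have hexact := kernelCokernelCompSequence_exact f g
  exact { exact := hexact.exact 3
          mono_f := (hexact.exact 2).mono_g ((isZero_kernel_of_mono g).eq_of_src _ _)
          epi_g := epi_of_epi_fac (cokernel.π_desc _ _ _) }

namespace IsCentralCharge

variable {Z : C → ℂ} (hZ : IsCentralCharge Z)
include hZ

lemma map_eq_zero_of_isZero {X : C} (hX : IsZero X) : Z X = 0 := by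
  have hS : (ShortComplex.mk (𝟙 X) (𝟙 X) (hX.eq_of_src _ _)).ShortExact :=
    { exact := ShortComplex.exact_of_isZero_X₂ _ hX }
  simpa using (hZ.additive _ hS).symm

open ZeroObject in
lemma map_eq_of_iso {X Y : C} (e : X ≅ Y) : Z X = Z Y := by
  have hS : (ShortComplex.mk e.hom (0 : Y ⟶ 0) comp_zero).ShortExact :=
    { exact := (ShortComplex.exact_iff_epi _ rfl).2 inferInstance
      epi_g := ⟨fun g h _ => (isZero_zero C).eq_of_src g h⟩ }
  simpa [hZ.map_eq_zero_of_isZero (isZero_zero C)] using (hZ.additive _ hS).symm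

lemma phase_mem_Ioc (E : C) : phase (Z E) ∈ Set.Ioc 0 1 :=
  phase_mem_Ioc_of_mem_phaseDomain (hZ.mem_phaseDomain E)

end IsCentralCharge

namespace Semistable

variable {Z : C → ℂ} (hZ : IsCentralCharge Z)
include hZ

lemma phase_le_of_mono {E F : C} (hF : Semistable Z F) (i : E ⟶ F) [Mono i]
    (hE : ¬IsZero E) : phase (Z E) ≤ phase (Z F) := by
  have hne : Subobject.mk i ≠ ⊥ := by
    rw [Ne, Subobject.mk_eq_bot_iff_zero]
    exact fun h => hE (IsZero.of_mono_eq_zero i h)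
  simpa only [hZ.map_eq_of_iso (Subobject.underlyingIso i)] using hF _ hne

lemma phase_le_of_shortExact {S : ShortComplex C} (hS : S.ShortExact)
    (h : Semistable Z S.X₂) : phase (Z S.X₂) ≤ phase (Z S.X₃) := by
  rw [hZ.additive S hS]
  by_cases h1 : IsZero S.X₁
  · rw [hZ.map_eq_zero_of_isZero h1, zero_add]
  refine phase_add_le_of_phase_le_phase_add (hZ.mem_phaseDomain _) (hZ.mem_phaseDomain _) ?_
  rw [← hZ.additive S hS]
  have : Mono S.f := hS.mono_f
  exact h.phase_le_of_mono hZ S.f h1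

lemma phase_le_of_ne_zero {T F : C} (hT : Semistable Z T) (hF : Semistable Z F)
    (f : T ⟶ F) (hf : f ≠ 0) : phase (Z T) ≤ phase (Z F) := by
  have hcoim : ¬IsZero (Abelian.coimage f) := fun h => hf <| by
    rw [← Abelian.coimage.fac f, h.eq_of_src (Abelian.factorThruCoimage f) 0, comp_zero]
  calc phase (Z T) ≤ phase (Z (Abelian.coimage f)) :=
        hT.phase_le_of_shortExact hZ (shortExact_cokernel (kernel.ι f))
    _ ≤ phase (Z F) := hF.phase_le_of_mono hZ (Abelian.factorThruCoimage f) hcoim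

end Semistable

namespace PhaseClass

variable {Z : C → ℂ} {I J : Set ℝ}

lemma hom_eq_zero_of_semistable (hZ : IsCentralCharge Z) (hIJ : ∀ a ∈ I, ∀ b ∈ J, b < a)
    {T F : C} (hT : Semistable Z T) (hTI : phase (Z T) ∈ I) (hF : PhaseClass Z J F)
    (f : T ⟶ F) : f = 0 := by
  induction hF with
  | zero F h => exact h.eq_of_tgt f 0
  | of_semistable F _ hsF hφF =>
    by_contra hf
    exact (hIJ _ hTI _ hφF).not_ge (hT.phase_le_of_ne_zero hZ hsF f hf)
  | ext S hS _ _ ih₁ ih₃ =>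
    obtain ⟨l, hl⟩ := KernelFork.IsLimit.lift' hS.fIsKernel f (ih₃ (f ≫ S.g))
    rw [← hl, ih₁ l, zero_comp]

lemma hom_eq_zero (hZ : IsCentralCharge Z) (hIJ : ∀ a ∈ I, ∀ b ∈ J, b < a) {T F : C}
    (hT : PhaseClass Z I T) (hF : PhaseClass Z J F) (f : T ⟶ F) : f = 0 := by
  induction hT with
  | zero T h => exact h.eq_of_src f 0
  | of_semistable T _ hsT hφT => exact hom_eq_zero_of_semistable hZ hIJ hsT hφT hF f
  | ext S hS _ _ ih₁ ih₃ =>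
    obtain ⟨d, hd⟩ := CokernelCofork.IsColimit.desc' hS.gIsCokernel f (ih₁ (S.f ≫ f))
    rw [← hd, ih₃ d, comp_zero]

variable {E : C} {p : ℕ} (c : Fin (p + 1) → Subobject E)
  (hm : ∀ j : Fin p, c j.succ ≤ c j.castSucc)

lemma of_subquot_ge (hlast : c (Fin.last p) = ⊥) (n : Fin (p + 1))
    (h : ∀ j : Fin p, n ≤ j.castSucc → PhaseClass Z I (subquot (hm j))) :
    PhaseClass Z I (c n : C) := by
  induction n using Fin.reverseInduction with
  | last =>
    rw [hlast]
    exact .zero _ ((isZero_zero C).of_iso Subobject.botCoeIsoZero)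
  | cast i ih =>
    exact .ext _ (shortExact_cokernel (Subobject.ofLE _ _ (hm i)))
      (ih fun j hj => h j (Fin.castSucc_lt_succ.le.trans hj)) (h i le_rfl)

lemma cokernel_of_subquot_lt (h0 : c 0 = ⊤) (n : Fin (p + 1))
    (h : ∀ j : Fin p, j.castSucc < n → PhaseClass Z I (subquot (hm j))) :
    PhaseClass Z I (cokernel (c n).arrow) := by
  induction n using Fin.induction with
  | zero =>
    rw [h0]
    exact .zero _ (isZero_cokernel_of_epi _)
  | succ i ih =>
    rw [← Subobject.ofLE_arrow (hm i)]
    exact .ext _ (shortExact_cokernel_map_comp _ _) (h i Fin.castSucc_lt_succ)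
      (ih fun j hj => h j (hj.trans Fin.castSucc_lt_succ))

end PhaseClass

lemma Monotone.exists_castSucc_lt_iff_lt {α : Type*} [LinearOrder α] {p : ℕ}
    {φ : Fin p → α} (hφ : Monotone φ) (ε : α) :
    ∃ k : Fin (p + 1), ∀ j : Fin p, j.castSucc < k ↔ φ j < ε := by
  classical
  have hex : ∃ n, ∀ j : Fin p, n ≤ j.val → ε ≤ φ j :=
    ⟨p, fun j hj => absurd j.isLt (by omega)⟩
  have hk : Nat.find hex ≤ p := Nat.find_min' hex fun j hj => absurd j.isLt (by omega)
  refine ⟨⟨Nat.find hex, Nat.lt_succ_of_le hk⟩, fun j => ⟨fun hj => ?_, fun hj => ?_⟩⟩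
  · obtain ⟨j', hjj', hj'⟩ : ∃ j' : Fin p, j.val ≤ j'.val ∧ φ j' < ε := by
      simpa using Nat.find_min hex (Fin.lt_def.1 hj)
    exact (hφ (Fin.le_def.2 hjj')).trans_lt hj'
  · by_contra hjk
    exact (Nat.find_spec hex j (not_lt.1 (Fin.lt_def.not.1 hjk))).not_gt hj

theorem phase_torsion_theory_general
    {C : Type u} [Category.{v} C] [Abelian C] (Z : C → ℂ)
    (hadd : ∀ S : ShortComplex C, S.ShortExact → Z S.X₂ = Z S.X₁ + Z S.X₃)
    (him : ∀ E : C, 0 ≤ (Z E).im)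
    (hre : ∀ E : C, (Z E).im = 0 → (Z E).re ≤ 0)
    (ε : ℝ) :
    (∀ T F : C, PhaseClass Z (Set.Icc ε 1) T → PhaseClass Z (Set.Ioo 0 ε) F →
      ∀ f : T ⟶ F, f = 0) ∧
    (HasHNProp Z → ∀ E : C,
      ∃ (E' E'' : C) (f : E' ⟶ E) (g : E ⟶ E'') (w : f ≫ g = 0),
        (ShortComplex.mk f g w).ShortExact ∧
        PhaseClass Z (Set.Icc ε 1) E' ∧ PhaseClass Z (Set.Ioo 0 ε) E'') := by
  have hZ : IsCentralCharge Z := ⟨hadd, fun E => ⟨him E, hre E⟩⟩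
  refine ⟨fun T F hT hF => hT.hom_eq_zero hZ (fun a ha b hb => hb.2.trans_le ha.1) hF,
    fun hHN E => ?_⟩
  by_cases hE : IsZero E
  · exact ⟨E, E, 𝟙 E, 𝟙 E, hE.eq_of_src _ _,
      { exact := ShortComplex.exact_of_isZero_X₂ _ hE }, .zero _ hE, .zero _ hE⟩
  obtain ⟨p, -, c, hm, hc0, hclast, hss, hmono⟩ := hHN E hE
  obtain ⟨k, hk⟩ := hmono.monotone.exists_castSucc_lt_iff_lt ε
  refine ⟨c k, cokernel (c k).arrow, (c k).arrow, cokernel.π _, cokernel.condition _,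
    shortExact_cokernel _, PhaseClass.of_subquot_ge c hm hclast k fun j hj => ?_,
    PhaseClass.cokernel_of_subquot_lt c hm hc0 k fun j hj => ?_⟩
  · exact .of_semistable _ (hss j).1 (hss j).2
      ⟨not_lt.1 ((hk j).not.1 hj.not_gt), (hZ.phase_mem_Ioc _).2⟩
  · exact .of_semistable _ (hss j).1 (hss j).2 ⟨(hZ.phase_mem_Ioc _).1, (hk j).1 hj⟩

/-- (i) `𝒫([ε,1])` is left orthogonal to `𝒫((0,ε))`; (ii) if `(𝒜, Z)` has the
Harder–Narasimhan property, every object `E` fits in a short exact sequence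
`0 → E′ → E → E″ → 0` with `E′ ∈ 𝒫([ε,1])` and `E″ ∈ 𝒫((0,ε))`, i.e.
`(𝒫([ε,1]), 𝒫((0,ε)))` is a torsion theory. -/
theorem phase_torsion_theory
    {C : Type u} [Category.{v} C] [Abelian C] (Z : C → ℂ)
    (hadd : ∀ S : ShortComplex C, S.ShortExact → Z S.X₂ = Z S.X₁ + Z S.X₃)
    (him : ∀ E : C, 0 ≤ (Z E).im)
    (hre : ∀ E : C, (Z E).im = 0 → (Z E).re ≤ 0)
    (ε : ℝ) (hε : ε ∈ Set.Ioc (0 : ℝ) 1) :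
    (∀ T F : C, PhaseClass Z (Set.Icc ε 1) T → PhaseClass Z (Set.Ioo 0 ε) F →
      ∀ f : T ⟶ F, f = 0) ∧
    (HasHNProp Z → ∀ E : C,
      ∃ (E' E'' : C) (f : E' ⟶ E) (g : E ⟶ E'') (w : f ≫ g = 0),
        (ShortComplex.mk f g w).ShortExact ∧
        PhaseClass Z (Set.Icc ε 1) E' ∧ PhaseClass Z (Set.Ioo 0 ε) E'') :=
  phase_torsion_theory_general Z hadd him hre ε
end

section
/- Let 𝒜 be an abelian category with a central charge Z, and suppose (𝒜, Z) has the Harder–Narasimhan property. Let E be a nonzero object with HN filtration E = E_1 ⊇ ⋯ ⊇ E_p ⊇ E_{p+1} = 0. Then for every subobject F ⊆ E, the complex number Z(F) lies in the polyhedron Pol(E) := { Σ_{j=1}^{p} λ_j·Z(E_j/E_{j+1}) + c : λ_j ∈ [0,1] for all j, c ∈ ℝ_{≥0} } ⊆ ℂ. -/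
/-
Intersecting `F` with the HN filtration, `Z(F) = Σⱼ (Z(F ∩ Eⱼ) - Z(F ∩ Eⱼ₊₁))`, and the `j`-th
difference is the charge of a subobject `I` of the semistable factor `Eⱼ/Eⱼ₊₁`, since
`(F ∩ Eⱼ)/(F ∩ Eⱼ₊₁)` embeds into `Eⱼ/Eⱼ₊₁`. Semistability gives `φ(I) ≤ φ(Eⱼ/Eⱼ₊₁)`, and since
`Z(I)` and `Z(Eⱼ/Eⱼ₊₁) - Z(I)` both lie in `ℍ ∪ ℝ_{≤0}`, this angle condition is exactly what
places `Z(I)` in `[0,1] · Z(Eⱼ/Eⱼ₊₁) + ℝ_{≥0}`.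
-/

open CategoryTheory CategoryTheory.Limits

universe v u

lemma Fin.sum_castSucc_sub_succ {M : Type*} [AddCommGroup M] :
    ∀ {n : ℕ} (g : Fin (n + 1) → M), ∑ j : Fin n, (g j.castSucc - g j.succ) = g 0 - g (Fin.last n)
  | 0, g => by simp
  | n + 1, g => by
    rw [Fin.sum_univ_castSucc]
    simp only [Fin.succ_castSucc, Fin.sum_castSucc_sub_succ (fun i => g i.castSucc),
      Fin.castSucc_zero, Fin.succ_last]
    abel

namespace Complex

lemma im_mul_re_le_re_mul_im_of_arg_le {z w : ℂ} (hz : 0 ≤ z.im) (h : z.arg ≤ w.arg) :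
    z.im * w.re ≤ z.re * w.im := by
  have hsin : 0 ≤ Real.sin (w.arg - z.arg) :=
    Real.sin_nonneg_of_nonneg_of_le_pi (by linarith)
      (by linarith [arg_nonneg_iff.mpr hz, arg_le_pi w])
  have hcross : z.re * w.im - z.im * w.re = (‖z‖ * ‖w‖) * Real.sin (w.arg - z.arg) := by
    rw [Real.sin_sub, ← norm_mul_cos_arg z, ← norm_mul_sin_arg z, ← norm_mul_cos_arg w,
      ← norm_mul_sin_arg w]
    ring
  nlinarith [mul_nonneg (mul_nonneg (norm_nonneg z) (norm_nonneg w)) hsin]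

end Complex

lemma arg_le_arg_of_phase_le {z w : ℂ} (hz : z ≠ 0) (hw : w ≠ 0) (h : phase z ≤ phase w) :
    z.arg ≤ w.arg := by
  rw [phase, phase, if_neg hz, if_neg hw] at h
  exact (div_le_div_iff_of_pos_right Real.pi_pos).mp h

lemma exists_mem_Icc_eq_mul_add_of_phase_le {z q : ℂ} (hz : 0 ≤ z.im) (hq : 0 ≤ q.im)
    (hz₀ : z.im = 0 → z.re ≤ 0) (hq₀ : q.im = 0 → q.re ≤ 0)
    (hph : z ≠ 0 → phase z ≤ phase (z + q)) :
    ∃ l ∈ Set.Icc (0 : ℝ) 1, ∃ c : ℝ, 0 ≤ c ∧ z = l * (z + q) + c := by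
  by_cases hz0 : z = 0
  · exact ⟨0, ⟨le_rfl, zero_le_one⟩, 0, le_rfl, by simp [hz0]⟩
  set w := z + q
  have hw_im : w.im = z.im + q.im := Complex.add_im z q
  have hw_re : w.re = z.re + q.re := Complex.add_re z q
  rcases (show 0 ≤ w.im by linarith).eq_or_lt with hw0 | hwpos
  · have hzim : z.im = 0 := by linarith
    have hzre : z.re < 0 := (hz₀ hzim).lt_of_ne fun h => hz0 (Complex.ext h hzim)
    have hqre : q.re ≤ 0 := hq₀ (by linarith)
    have hwre : w.re < 0 := by linarith
    refine ⟨z.re / w.re, ⟨div_nonneg_of_nonpos hzre.le hwre.le, div_le_one_of_ge (by linarith)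
      hwre.le⟩, 0, le_rfl, Complex.ext ?_ ?_⟩
    · simp [← hw0, div_mul_cancel₀ _ hwre.ne]
    · simp [← hw0, hzim]
  · have hw0 : w ≠ 0 := fun h => by simp [h] at hwpos
    have hcross := Complex.im_mul_re_le_re_mul_im_of_arg_le hz
      (arg_le_arg_of_phase_le hz0 hw0 (hph hz0))
    refine ⟨z.im / w.im, ⟨div_nonneg hz hwpos.le, (div_le_one hwpos).mpr (by linarith)⟩,
      z.re - z.im / w.im * w.re, ?_, Complex.ext ?_ ?_⟩
    · rw [div_mul_eq_mul_div, sub_nonneg, div_le_iff₀ hwpos]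
      exact hcross
    · simp
    · simp only [Complex.add_im, Complex.mul_im, Complex.ofReal_re, Complex.ofReal_im, zero_mul,
        add_zero]
      field_simp

variable {C : Type*} [Category C] [Abelian C]

def IsAdditive (Z : C → ℂ) : Prop :=
  ∀ S : ShortComplex C, S.ShortExact → Z S.X₂ = Z S.X₁ + Z S.X₃

variable {Z : C → ℂ}

namespace IsAdditive

lemma eq_zero_of_isZero (hZ : IsAdditive Z) {X : C} (hX : IsZero X) : Z X = 0 := by
  have h := hZ (ShortComplex.mk (𝟙 X) (𝟙 X) (hX.eq_of_src _ _))
    (ShortComplex.ShortExact.mk' (ShortComplex.exact_of_isZero_X₂ _ hX)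
      (by dsimp; infer_instance) (by dsimp; infer_instance))
  dsimp at h
  linear_combination -h

lemma eq_add_cokernel (hZ : IsAdditive Z) {A B : C} (f : A ⟶ B) [Mono f] :
    Z B = Z A + Z (cokernel f) :=
  hZ (ShortComplex.mk f (cokernel.π f) (cokernel.condition f))
    (ShortComplex.ShortExact.mk'
      (ShortComplex.exact_of_g_is_cokernel _ (cokernelIsCokernel f))
      (by dsimp; infer_instance) (by dsimp; infer_instance))

lemma eq_of_iso (hZ : IsAdditive Z) {A B : C} (e : A ≅ B) : Z A = Z B := by
  rw [hZ.eq_add_cokernel e.hom,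
    hZ.eq_zero_of_isZero ((isZero_zero C).of_iso (cokernel.ofEpi e.hom)), add_zero]

lemma eq_zero_bot (hZ : IsAdditive Z) {E : C} : Z ((⊥ : Subobject E) : C) = 0 :=
  hZ.eq_zero_of_isZero ((isZero_zero C).of_iso Subobject.botCoeIsoZero)

end IsAdditive

lemma Semistable.phase_le_of_mono_s9 (hZ : IsAdditive Z) {E I : C}
    (hE : Semistable Z E) (ι : I ⟶ E) [Mono ι] (hI : Z I ≠ 0) : phase (Z I) ≤ phase (Z E) := by
  have hne : Subobject.mk ι ≠ ⊥ := by
    rw [Ne, Subobject.mk_eq_bot_iff_zero]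
    exact fun h => hI (hZ.eq_zero_of_isZero (IsZero.of_mono_eq_zero ι h))
  simpa only [hZ.eq_of_iso (Subobject.underlyingIso ι)] using hE _ hne

section Subobject

variable {E : C} (F : Subobject E) {X Y : Subobject E} (h : Y ≤ X)

lemma ofLE_inf_comp_ofLE_comp_cokernel_π :
    Subobject.ofLE _ _ (inf_le_inf_left F h) ≫ Subobject.ofLE (F ⊓ X) X inf_le_right ≫
      cokernel.π (Subobject.ofLE Y X h) = 0 := by
  rw [Subobject.ofLE_comp_ofLE_assoc, ← Subobject.ofLE_comp_ofLE _ Y X inf_le_right h,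
    Category.assoc, cokernel.condition, comp_zero]

noncomputable def isLimitKernelForkOfLEInf :
    IsLimit (KernelFork.ofι (Subobject.ofLE _ _ (inf_le_inf_left F h))
      (ofLE_inf_comp_ofLE_comp_cokernel_π F h)) := by
  refine KernelFork.IsLimit.ofι' _ _ fun {W} t ht => ?_
  rw [← Category.assoc] at ht
  have hY : Y.Factors (t ≫ (F ⊓ X).arrow) := by
    rw [← Subobject.ofLE_arrow (inf_le_right : F ⊓ X ≤ X), ← Category.assoc,
      ← Abelian.monoLift_comp _ _ ht, Category.assoc, Subobject.ofLE_arrow]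
    exact Subobject.factors_comp_arrow _
  have hF : F.Factors (t ≫ (F ⊓ X).arrow) :=
    Subobject.factors_of_factors_right t (Subobject.inf_arrow_factors_left F X)
  refine ⟨(F ⊓ Y).factorThru _ ((Subobject.inf_factors _).mpr ⟨hF, hY⟩), ?_⟩
  rw [← cancel_mono (F ⊓ X).arrow, Category.assoc, Subobject.ofLE_arrow,
    Subobject.factorThru_arrow]

lemma IsAdditive.exists_mono_subquot_inf_eq_inf_add (hZ : IsAdditive Z) :
    ∃ (I : C) (ι : I ⟶ subquot h), Mono ι ∧
      Z ((F ⊓ X : Subobject E) : C) = Z ((F ⊓ Y : Subobject E) : C) + Z I := by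
  set v := Subobject.ofLE (F ⊓ X) X inf_le_right ≫ cokernel.π (Subobject.ofLE Y X h)
  have hzero : Subobject.ofLE _ _ (inf_le_inf_left F h) ≫ factorThruImage v = 0 := by
    rw [← cancel_mono (image.ι v), Category.assoc, image.fac, zero_comp]
    exact ofLE_inf_comp_ofLE_comp_cokernel_π F h
  have hker : IsLimit (KernelFork.ofι _ hzero) :=
    isKernelOfComp (image.ι v) v (isLimitKernelForkOfLEInf F h) hzero (image.fac v)
  exact ⟨image v, image.ι v, (Image.monoFactorisation v).m_mono,
    hZ (ShortComplex.mk _ _ hzero) (ShortComplex.ShortExact.mk'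
      (ShortComplex.exact_of_f_is_kernel _ hker) inferInstance inferInstance)⟩

end Subobject

lemma IsAdditive.exists_inf_eq_inf_add_mul_add (hZ : IsAdditive Z)
    (him : ∀ A : C, 0 ≤ (Z A).im) (hre : ∀ A : C, (Z A).im = 0 → (Z A).re ≤ 0)
    {E : C} (F : Subobject E) {X Y : Subobject E} (h : Y ≤ X) (hss : Semistable Z (subquot h)) :
    ∃ l ∈ Set.Icc (0 : ℝ) 1, ∃ c : ℝ, 0 ≤ c ∧
      Z ((F ⊓ X : Subobject E) : C) = Z ((F ⊓ Y : Subobject E) : C) + (l * Z (subquot h) + c) := by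
  obtain ⟨I, ι, _, hFI⟩ := hZ.exists_mono_subquot_inf_eq_inf_add F h
  have hsum : Z (subquot h) = Z I + Z (cokernel ι) := hZ.eq_add_cokernel ι
  obtain ⟨l, hl, c, hc, hI⟩ := exists_mem_Icc_eq_mul_add_of_phase_le (him I) (him _) (hre I)
    (hre _) (hsum ▸ hss.phase_le_of_mono_s9 hZ ι)
  exact ⟨l, hl, c, hc, by rw [hFI, hI, hsum]⟩

theorem charge_of_subobject_mem_HN_polyhedron_general
    {C : Type u} [Category.{v} C] [Abelian C] (Z : C → ℂ)
    (hadd : ∀ S : ShortComplex C, S.ShortExact → Z S.X₂ = Z S.X₁ + Z S.X₃)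
    (him : ∀ E : C, 0 ≤ (Z E).im)
    (hre : ∀ E : C, (Z E).im = 0 → (Z E).re ≤ 0)
    (E : C) (p : ℕ)
    (c : Fin (p + 1) → Subobject E)
    (hm : ∀ j : Fin p, c j.succ ≤ c j.castSucc)
    (htop : c 0 = ⊤) (hbot : c (Fin.last p) = ⊥)
    (hss : ∀ j : Fin p, ¬IsZero (subquot (hm j)) ∧ Semistable Z (subquot (hm j))) :
    ∀ F : Subobject E, ∃ (lam : Fin p → ℝ) (cst : ℝ),
      (∀ j, lam j ∈ Set.Icc (0 : ℝ) 1) ∧ 0 ≤ cst ∧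
      Z ((F : C)) = (∑ j, (lam j : ℂ) * Z (subquot (hm j))) + (cst : ℂ) := by
  intro F
  choose lam hlam cst hcst hstep using fun j =>
    IsAdditive.exists_inf_eq_inf_add_mul_add hadd him hre F (hm j) (hss j).2
  refine ⟨lam, ∑ j, cst j, hlam, Finset.sum_nonneg fun j _ => hcst j, ?_⟩
  have htel := Fin.sum_castSucc_sub_succ fun i => Z ((F ⊓ c i : Subobject E) : C)
  simp only [htop, hbot, inf_top_eq, inf_bot_eq, IsAdditive.eq_zero_bot hadd, sub_zero, hstep,
    add_sub_cancel_left] at htel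
  rw [← htel, Finset.sum_add_distrib]
  push_cast
  ring

/-- For an abelian category with central charge having the Harder–Narasimhan property, and
`E` a nonzero object with HN filtration `E = E₁ ⊇ ⋯ ⊇ E_p ⊇ E_{p+1} = 0`, every subobject
`F ⊆ E` has `Z(F)` lying in the Harder–Narasimhan polyhedron
`Pol(E) = {∑ λⱼ Z(Eⱼ/Eⱼ₊₁) + c | λⱼ ∈ [0,1], c ∈ ℝ_{≥0}}`. -/
theorem charge_of_subobject_mem_HN_polyhedron
    {C : Type u} [Category.{v} C] [Abelian C] (Z : C → ℂ)
    (hadd : ∀ S : ShortComplex C, S.ShortExact → Z S.X₂ = Z S.X₁ + Z S.X₃)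
    (him : ∀ E : C, 0 ≤ (Z E).im)
    (hre : ∀ E : C, (Z E).im = 0 → (Z E).re ≤ 0)
    (hHN : HasHNProp Z)
    (E : C) (hE : ¬IsZero E) (p : ℕ) (hp : 0 < p)
    (c : Fin (p + 1) → Subobject E)
    (hm : ∀ j : Fin p, c j.succ ≤ c j.castSucc)
    (htop : c 0 = ⊤) (hbot : c (Fin.last p) = ⊥)
    (hss : ∀ j : Fin p, ¬IsZero (subquot (hm j)) ∧ Semistable Z (subquot (hm j)))
    (hphase : StrictMono fun j : Fin p => phase (Z (subquot (hm j)))) :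
    ∀ F : Subobject E, ∃ (lam : Fin p → ℝ) (cst : ℝ),
      (∀ j, lam j ∈ Set.Icc (0 : ℝ) 1) ∧ 0 ≤ cst ∧
      Z ((F : C)) = (∑ j, (lam j : ℂ) * Z (subquot (hm j))) + (cst : ℂ) :=
  charge_of_subobject_mem_HN_polyhedron_general Z hadd him hre E p c hm htop hbot hss
end

section
/- Let 𝒜 be an abelian category with a central charge Z and let E be a nonzero object of 𝒜. Then the following are equivalent: (i) there exists a subobject F ⊆ E with Im(Z(F)·conj(Z(E))) > 0 (when Z(F) ≠ 0 and Z(E) ≠ 0 this says exactly that φ(F) > φ(E), i.e. F destabilizes E); (ii) there exist a finite strictly descending chain of subobjects E = E_0 ⊋ E_1 ⊋ ⋯ ⊋ E_p ⊋ E_{p+1} = 0 and real numbers w_0 < w_1 < ⋯ < w_p such that Σ_{j=0}^{p} w_j · Im(Z(E_j/E_{j+1})·conj(Z(E))) > 0. -/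
open CategoryTheory CategoryTheory.Limits Finset ZeroObject

universe v u

section aux
variable {C : Type u} [Category.{v} C] [Abelian C] (Z : C → ℂ)
  (hadd : ∀ S : ShortComplex C, S.ShortExact → Z S.X₂ = Z S.X₁ + Z S.X₃)

include hadd

lemma Z_zero_obj : Z (0 : C) = 0 := by
  have h : (ShortComplex.mk (𝟙 (0:C)) (𝟙 (0:C))
      ((isZero_zero C).eq_of_tgt _ _)).ShortExact :=
    { exact := ShortComplex.exact_of_isZero_X₂ _ (isZero_zero C) }
  have := hadd _ h
  simpa using this.symm

lemma Z_iso {A B : C} (e : A ≅ B) : Z A = Z B := by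
  have hepi : Epi (0 : B ⟶ (0 : C)) := ⟨fun g₁ g₂ _ => (isZero_zero C).eq_of_src g₁ g₂⟩
  have h : (ShortComplex.mk e.hom (0 : B ⟶ (0:C)) (by simp)).ShortExact :=
    { exact := (ShortComplex.exact_iff_epi _ rfl).2 inferInstance
      epi_g := hepi }
  have := hadd _ h
  rw [Z_zero_obj Z hadd] at this
  simpa using this.symm

lemma Z_subquot {E : C} {T S : Subobject E} (h : T ≤ S) :
    Z (subquot h) = Z (S : C) - Z (T : C) := by
  have hse : (ShortComplex.mk (Subobject.ofLE T S h)
      (cokernel.π (Subobject.ofLE T S h)) (cokernel.condition _)).ShortExact :=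
    { exact := ShortComplex.exact_of_g_is_cokernel _ (cokernelIsCokernel _) }
  have := hadd _ hse
  simp only [ShortComplex.mk] at this
  rw [show Z (subquot h) = Z (cokernel (Subobject.ofLE T S h)) from rfl]
  rw [this]; ring

end aux

/-- Abel summation helper. -/
lemma abel_aux (p : ℕ) (w G : ℕ → ℝ) (hw : ∀ j, j < p → w j < w (j+1))
    (hG0 : G 0 = 0) (hGp : G (p+1) = 0)
    (hpos : 0 < ∑ j ∈ Finset.range (p+1), w j * (G j - G (j+1))) :
    ∃ j, 0 < G j := by
  by_contra hc
  push_neg at hc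
  have key : ∑ j ∈ Finset.range (p+1), w j * (G j - G (j+1))
      = ∑ j ∈ Finset.range p, (w (j+1) - w j) * G (j+1) := by
    have h1 : ∑ j ∈ Finset.range (p+1), w j * G j
        = ∑ j ∈ Finset.range p, w (j+1) * G (j+1) + w 0 * G 0 :=
      Finset.sum_range_succ' _ _
    have h2 : ∑ j ∈ Finset.range (p+1), w j * G (j+1)
        = ∑ j ∈ Finset.range p, w j * G (j+1) + w p * G (p+1) :=
      Finset.sum_range_succ _ _
    simp only [mul_sub, Finset.sum_sub_distrib, h1, h2, hG0, hGp, mul_zero,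
      add_zero, sub_mul]
  rw [key] at hpos
  have : ∑ j ∈ Finset.range p, (w (j+1) - w j) * G (j+1) ≤ 0 :=
    Finset.sum_nonpos fun j hj => mul_nonpos_of_nonneg_of_nonpos
      (by linarith [hw j (Finset.mem_range.1 hj)]) (hc _)
  linarith

/-- For a nonzero object `E` of an abelian category with central charge `Z`, there is a
destabilizing subobject `F ⊆ E` (one with `Im(Z(F) · conj(Z(E))) > 0`) if and only if
there is a finite strictly descending weighted filtration
`E = E₀ ⊋ E₁ ⊋ ⋯ ⊋ E_{p+1} = 0` with weights `w₀ < ⋯ < w_p` such that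
`∑ⱼ wⱼ · Im(Z(Eⱼ/Eⱼ₊₁) · conj(Z(E))) > 0`. -/
theorem exists_destabilizing_subobject_iff_weighted_filtration
    {C : Type u} [Category.{v} C] [Abelian C] (Z : C → ℂ)
    (hadd : ∀ S : ShortComplex C, S.ShortExact → Z S.X₂ = Z S.X₁ + Z S.X₃)
    (him : ∀ E : C, 0 ≤ (Z E).im)
    (hre : ∀ E : C, (Z E).im = 0 → (Z E).re ≤ 0)
    (E : C) (hE : ¬IsZero E) :
    (∃ F : Subobject E, 0 < (Z ((F : C)) * (starRingEnd ℂ) (Z E)).im) ↔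
    (∃ (p : ℕ) (c : Fin (p + 2) → Subobject E)
      (hlt : ∀ j : Fin (p + 1), c j.succ < c j.castSucc) (w : Fin (p + 1) → ℝ),
      c 0 = ⊤ ∧ c (Fin.last (p + 1)) = ⊥ ∧ StrictMono w ∧
      0 < ∑ j, w j * (Z (subquot (hlt j).le) * (starRingEnd ℂ) (Z E)).im) := by
  set g : Subobject E → ℝ := fun S => (Z (S : C) * (starRingEnd ℂ) (Z E)).im with hg
  have hgtop : g ⊤ = 0 := by
    have : Z ((⊤ : Subobject E) : C) = Z E := Z_iso Z hadd (asIso (⊤ : Subobject E).arrow)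
    simp only [hg, this]
    ring_nf
    simp [Complex.mul_im]
    ring
  have hgbot : g ⊥ = 0 := by
    have : Z ((⊥ : Subobject E) : C) = 0 := by
      rw [Z_iso Z hadd (Subobject.botCoeIsoZero (B := E)), Z_zero_obj Z hadd]
    simp [hg, this]
  have hsq : ∀ {T S : Subobject E} (h : T ≤ S),
      (Z (subquot h) * (starRingEnd ℂ) (Z E)).im = g S - g T := by
    intro T S h
    rw [Z_subquot Z hadd h, sub_mul, Complex.sub_im]
  constructor
  · rintro ⟨F, hF⟩
    have hF' : 0 < g F := hF
    have hFtop : F < ⊤ := lt_top_iff_ne_top.2 (by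
      rintro rfl
      have : (0:ℝ) < g ⊤ := hF'
      rw [hgtop] at this
      exact lt_irrefl _ this)
    have hFbot : ⊥ < F := bot_lt_iff_ne_bot.2 (by
      rintro rfl
      have : (0:ℝ) < g ⊥ := hF'
      rw [hgbot] at this
      exact lt_irrefl _ this)
    set c : Fin 3 → Subobject E := ![⊤, F, ⊥] with hcdef
    have hlt : ∀ j : Fin 2, c j.succ < c j.castSucc := by
      intro j
      fin_cases j
      · simpa [c] using hFtop
      · simpa [c] using hFbot
    refine ⟨1, c, hlt, ![0, 1], rfl, rfl, ?_, ?_⟩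
    · intro a b hab
      fin_cases a <;> fin_cases b <;> simp_all <;> norm_num
    · rw [Fin.sum_univ_two, hsq, hsq]
      have e1 : c (0:Fin 2).castSucc = ⊤ := rfl
      have e2 : c (0:Fin 2).succ = F := rfl
      have e3 : c (1:Fin 2).castSucc = F := rfl
      have e4 : c (1:Fin 2).succ = ⊥ := rfl
      rw [e1, e2, e3, e4, hgtop, hgbot]
      norm_num
      linarith
  · rintro ⟨p, c, hlt, w, hc0, hclast, hw, hpos⟩
    set G : ℕ → ℝ := fun j => if h : j < p+2 then g (c ⟨j, h⟩) else 0 with hG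
    set W : ℕ → ℝ := fun j => if h : j < p+1 then w ⟨j, h⟩ else 0 with hW
    have hsum : ∑ j, w j * (Z (subquot (hlt j).le) * (starRingEnd ℂ) (Z E)).im
        = ∑ j ∈ Finset.range (p+1), W j * (G j - G (j+1)) := by
      rw [← Fin.sum_univ_eq_sum_range (fun j => W j * (G j - G (j+1))) (p+1)]
      refine Finset.sum_congr rfl fun j _ => ?_
      have hj1 : (j : ℕ) < p + 1 := j.isLt
      have hj2 : (j : ℕ) < p + 2 := Nat.lt_succ_of_lt hj1
      have hj3 : (j : ℕ) + 1 < p + 2 := Nat.succ_lt_succ hj1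
      rw [hsq]
      simp only [hG, hW, dif_pos hj1, dif_pos hj2, dif_pos hj3]
      rw [show (⟨(j:ℕ), hj1⟩ : Fin (p+1)) = j from rfl,
        show (⟨(j:ℕ), hj2⟩ : Fin (p+2)) = j.castSucc from rfl,
        show (⟨(j:ℕ)+1, hj3⟩ : Fin (p+2)) = j.succ from rfl]
    rw [hsum] at hpos
    have habel := abel_aux (p := p) W G ?_ ?_ ?_ hpos
    · obtain ⟨j, hj⟩ := habel
      by_cases h : j < p + 2
      · refine ⟨c ⟨j, h⟩, ?_⟩
        have : G j = g (c ⟨j, h⟩) := by simp [hG, dif_pos h]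
        rw [this] at hj
        exact hj
      · rw [show G j = 0 by simp [hG, dif_neg h]] at hj
        exact absurd hj (lt_irrefl 0)
    · intro j hjp
      have h1 : j < p + 1 := Nat.lt_succ_of_lt hjp
      have h2 : j + 1 < p + 1 := Nat.succ_lt_succ hjp
      simp only [hW, dif_pos h1, dif_pos h2]
      exact hw (by exact Fin.mk_lt_mk.2 (Nat.lt_succ_self j))
    · have h0 : (0:ℕ) < p + 2 := Nat.succ_pos _
      simp only [hG, dif_pos h0]
      rw [show (⟨0, h0⟩ : Fin (p+2)) = 0 from rfl, hc0, hgtop]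
    · have hp1 : p + 1 < p + 2 := Nat.lt_succ_self _
      simp only [hG, dif_pos hp1]
      rw [show (⟨p+1, hp1⟩ : Fin (p+2)) = Fin.last (p+1) from rfl, hclast, hgbot]
end

section
/- Let p ≥ 2 and 1 ≤ k ≤ p−1. Let α = (r_j, d_j, w_j)_{j=1,…,p} be triples of real numbers with w_1 < w_2 < ⋯ < w_p and, for each j, either r_j > 0 or (r_j = 0 and d_j > 0). Set R = Σ_j r_j, D = Σ_j d_j, L(α) = Σ_j w_j (R d_j − D r_j), B(α) = Σ_j w_j² r_j, and μ(α) = L(α)/√(B(α)) when B(α) > 0. Assume r_k + r_{k+1} > 0 and let α′ be the length-(p−1) sequence obtained from α by deleting the (k+1)-st entry and replacing the k-th entry by (r_k + r_{k+1}, d_k + d_{k+1}, (w_k r_k + w_{k+1} r_{k+1})/(r_k + r_{k+1})), all other entries unchanged; assume B(α′) > 0 (whence B(α) > 0 and the weights of α′ are strictly increasing). Then: (1) If μ(α) ≥ 0 and d_k r_{k+1} − r_k d_{k+1} ≥ 0, then μ(α′) ≥ μ(α), with equality if and only if d_k r_{k+1} = r_k d_{k+1} and μ(α) = 0. (2) Conversely,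 let β = (r′_j, d′_j, w′_j)_{j=1,…,p−1} be such a sequence with B(β) > 0 and μ(β) ≥ 0, and suppose its k-th entry is split as r′_k = r_k + r_{k+1}, d′_k = d_k + d_{k+1}, where each of (r_k, d_k) and (r_{k+1}, d_{k+1}) satisfies (r > 0 or (r = 0 and d > 0)), r_k + r_{k+1} > 0, and d_k r_{k+1} − r_k d_{k+1} < 0. Then for all sufficiently small δ > 0, the length-p sequence α obtained from β by replacing the k-th entry by the two entries (r_k, d_k, w_k) and (r_{k+1}, d_{k+1}, w_{k+1}), where w_{k+1} − w_k = δ and (w_k r_k + w_{k+1} r_{k+1})/(r_k + r_{k+1}) = w′_k, has strictly increasing weights and satisfies μ(α) > μ(β). -/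
/-- The numerical invariant `μ = L/√B` of a rank–degree–weight sequence, where
`L = ∑ⱼ wⱼ (R dⱼ − D rⱼ)` with `R = ∑ rⱼ`, `D = ∑ dⱼ`, and `B = ∑ⱼ wⱼ² rⱼ`. -/
noncomputable def seqMu {p : ℕ} (r d w : Fin p → ℝ) : ℝ :=
  (∑ j, w j * ((∑ i, r i) * d j - (∑ i, d i) * r j)) / Real.sqrt (∑ j, (w j) ^ 2 * r j)

/-- Delete the `(k+1)`-st entry (0-based) of a sequence of length `q+1`, replacing the
`k`-th entry by the value `v`. -/
def mergeAt {q : ℕ} (k : ℕ) (f : Fin (q + 1) → ℝ) (v : ℝ) : Fin q → ℝ := fun j =>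
  if j.1 < k then f ⟨j.1, Nat.lt_succ_of_lt j.2⟩
  else if j.1 = k then v
  else f ⟨j.1 + 1, Nat.succ_lt_succ j.2⟩

/-- The merged rank (or degree) sequence: entries `k`, `k+1` are replaced by their sum. -/
noncomputable def rMerge {q : ℕ} (k : ℕ) (hk : k < q) (r : Fin (q + 1) → ℝ) : Fin q → ℝ :=
  mergeAt k r (r ⟨k, Nat.lt_succ_of_lt hk⟩ + r ⟨k + 1, Nat.succ_lt_succ hk⟩)

/-- The merged weight sequence: entries `k`, `k+1` of `w` are replaced by the `r`-weighted
average `(wₖ rₖ + wₖ₊₁ rₖ₊₁)/(rₖ + rₖ₊₁)`. -/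
noncomputable def wMerge {q : ℕ} (k : ℕ) (hk : k < q) (r w : Fin (q + 1) → ℝ) : Fin q → ℝ :=
  mergeAt k w
    ((w ⟨k, Nat.lt_succ_of_lt hk⟩ * r ⟨k, Nat.lt_succ_of_lt hk⟩ +
        w ⟨k + 1, Nat.succ_lt_succ hk⟩ * r ⟨k + 1, Nat.succ_lt_succ hk⟩) /
      (r ⟨k, Nat.lt_succ_of_lt hk⟩ + r ⟨k + 1, Nat.succ_lt_succ hk⟩))

/-- Split the `k`-th entry of a sequence of length `q` into the two entries `a`, `b`,
producing a sequence of length `q+1`. -/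
def expandAt {q : ℕ} (k : ℕ) (hk : k < q) (f : Fin q → ℝ) (a b : ℝ) : Fin (q + 1) → ℝ :=
  fun j =>
    if h : j.1 < k then f ⟨j.1, h.trans hk⟩
    else if h2 : j.1 = k then a
    else if h3 : j.1 = k + 1 then b
    else f ⟨j.1 - 1, by have hj := j.2; omega⟩

/-! Merging entries `k` and `k + 1` adds `(wₖ₊₁ - wₖ) R (dₖ rₖ₊₁ - rₖ dₖ₊₁) / (rₖ + rₖ₊₁)` to `L`
and subtracts `(wₖ₊₁ - wₖ)² rₖ rₖ₊₁ / (rₖ + rₖ₊₁)` from `B`. Under the phase condition deletion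
thus raises `L ≥ 0` and lowers `B`, so `μ = L / √B` cannot decrease. Equality needs the cross term
`dₖ rₖ₊₁ - rₖ dₖ₊₁` to vanish, which under the positivity conditions forces `rₖ rₖ₊₁ > 0`, so `B`
drops strictly and `L = 0`. Conversely, splitting an entry with weight gap `δ` raises `L` by `c δ`
with `c > 0` but `B` only by `O(δ²)`, so `μ` strictly increases for small `δ`. -/

open Finset Real

noncomputable def seqL {p : ℕ} (r d w : Fin p → ℝ) : ℝ :=
  ∑ j, w j * ((∑ i, r i) * d j - (∑ i, d i) * r j)

noncomputable def seqB {p : ℕ} (r w : Fin p → ℝ) : ℝ :=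
  ∑ j, w j ^ 2 * r j

lemma seqMu_eq {p : ℕ} (r d w : Fin p → ℝ) : seqMu r d w = seqL r d w / √(seqB r w) := rfl

lemma seqL_nonneg_of_seqMu_nonneg {p : ℕ} {r d w : Fin p → ℝ} (hB : 0 < seqB r w)
    (hμ : 0 ≤ seqMu r d w) : 0 ≤ seqL r d w := by
  rw [seqMu_eq] at hμ
  exact (div_nonneg_iff.1 hμ).elim And.left fun h => absurd h.2 (sqrt_pos.2 hB).not_ge

lemma seqMu_eq_zero_iff {p : ℕ} {r d w : Fin p → ℝ} (hB : 0 < seqB r w) :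
    seqMu r d w = 0 ↔ seqL r d w = 0 := by
  rw [seqMu_eq, div_eq_zero_iff, or_iff_left (sqrt_pos.2 hB).ne']

section Merge

variable {q : ℕ} (k : ℕ)

lemma mergeAt_map₃ (G : ℝ → ℝ → ℝ → ℝ) (f g h : Fin (q + 1) → ℝ) (u v x : ℝ) (j : Fin q) :
    G (mergeAt k f u j) (mergeAt k g v j) (mergeAt k h x j) =
      mergeAt k (fun i => G (f i) (g i) (h i)) (G u v x) j := by
  unfold mergeAt
  split_ifs <;> rfl

variable (hk : k < q)

lemma mergeAt_eq_update_removeNth (f : Fin (q + 1) → ℝ) (v : ℝ) :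
    mergeAt k f v =
      Function.update (Fin.removeNth ⟨k + 1, Nat.succ_lt_succ hk⟩ f) ⟨k, hk⟩ v := by
  funext j
  simp only [mergeAt, Function.update_apply, Fin.removeNth, Fin.succAbove, Fin.ext_iff,
    Fin.lt_def, Fin.val_castSucc]
  split_ifs <;> first | omega | rfl

lemma sum_mergeAt (f : Fin (q + 1) → ℝ) (v : ℝ) :
    ∑ j, mergeAt k f v j =
      ∑ j, f j - f ⟨k, Nat.lt_succ_of_lt hk⟩ - f ⟨k + 1, Nat.succ_lt_succ hk⟩ + v := by
  have hsucc : Fin.succAbove ⟨k + 1, by omega⟩ ⟨k, hk⟩ = ⟨k, by omega⟩ :=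
    Fin.succAbove_of_castSucc_lt _ _ (Fin.lt_def.2 (by simp))
  rw [mergeAt_eq_update_removeNth k hk, sum_update_of_mem (mem_univ _),
    Fin.sum_univ_succAbove f ⟨k + 1, by omega⟩, ← sum_erase_add _ _ (mem_univ ⟨k, hk⟩),
    sdiff_singleton_eq_erase, hsucc]
  simp only [Fin.removeNth]
  ring

lemma sum_rMerge (r : Fin (q + 1) → ℝ) : ∑ j, rMerge k hk r j = ∑ j, r j := by
  rw [rMerge, sum_mergeAt k hk]
  ring

lemma seqL_merge (r d w : Fin (q + 1) → ℝ)
    (hs : r ⟨k, Nat.lt_succ_of_lt hk⟩ + r ⟨k + 1, Nat.succ_lt_succ hk⟩ ≠ 0) :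
    seqL (rMerge k hk r) (rMerge k hk d) (wMerge k hk r w) =
      seqL r d w +
        (w ⟨k + 1, Nat.succ_lt_succ hk⟩ - w ⟨k, Nat.lt_succ_of_lt hk⟩) * (∑ i, r i) *
          (d ⟨k, Nat.lt_succ_of_lt hk⟩ * r ⟨k + 1, Nat.succ_lt_succ hk⟩ -
            r ⟨k, Nat.lt_succ_of_lt hk⟩ * d ⟨k + 1, Nat.succ_lt_succ hk⟩) /
          (r ⟨k, Nat.lt_succ_of_lt hk⟩ + r ⟨k + 1, Nat.succ_lt_succ hk⟩) := by
  simp only [seqL, sum_rMerge]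
  unfold rMerge wMerge
  simp only [mergeAt_map₃ k (fun a b c => c * ((∑ i, r i) * b - (∑ i, d i) * a)),
    sum_mergeAt k hk]
  field_simp
  ring

lemma seqB_merge (r w : Fin (q + 1) → ℝ)
    (hs : r ⟨k, Nat.lt_succ_of_lt hk⟩ + r ⟨k + 1, Nat.succ_lt_succ hk⟩ ≠ 0) :
    seqB (rMerge k hk r) (wMerge k hk r w) =
      seqB r w -
        (w ⟨k + 1, Nat.succ_lt_succ hk⟩ - w ⟨k, Nat.lt_succ_of_lt hk⟩) ^ 2 *
          r ⟨k, Nat.lt_succ_of_lt hk⟩ * r ⟨k + 1, Nat.succ_lt_succ hk⟩ /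
          (r ⟨k, Nat.lt_succ_of_lt hk⟩ + r ⟨k + 1, Nat.succ_lt_succ hk⟩) := by
  unfold seqB rMerge wMerge
  rw [sum_congr rfl fun j _ => mergeAt_map₃ k (fun a _ c => c ^ 2 * a) r r w _ 0 _ j,
    sum_mergeAt k hk]
  field_simp
  ring

end Merge

section Expand

variable {q : ℕ} (k : ℕ) (hk : k < q)

@[simp]
lemma expandAt_left (f : Fin q → ℝ) (a b : ℝ) :
    expandAt k hk f a b ⟨k, Nat.lt_succ_of_lt hk⟩ = a := by
  simp [expandAt]

@[simp]
lemma expandAt_right (f : Fin q → ℝ) (a b : ℝ) :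
    expandAt k hk f a b ⟨k + 1, Nat.succ_lt_succ hk⟩ = b := by
  simp [expandAt]

lemma mergeAt_expandAt (f : Fin q → ℝ) (a b : ℝ) :
    mergeAt k (expandAt k hk f a b) (f ⟨k, hk⟩) = f := by
  funext j
  simp only [mergeAt, expandAt]
  split_ifs <;> first | omega | rfl | congr 1; ext; simp; omega

lemma rMerge_expandAt (f : Fin q → ℝ) (a b : ℝ) (hf : f ⟨k, hk⟩ = a + b) :
    rMerge k hk (expandAt k hk f a b) = f := by
  rw [rMerge, expandAt_left, expandAt_right, ← hf, mergeAt_expandAt]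

lemma wMerge_expandAt (r w : Fin q → ℝ) (a b x y : ℝ)
    (hw : (x * a + y * b) / (a + b) = w ⟨k, hk⟩) :
    wMerge k hk (expandAt k hk r a b) (expandAt k hk w x y) = w := by
  rw [wMerge, expandAt_left, expandAt_right, expandAt_left, expandAt_right, hw, mergeAt_expandAt]

lemma sum_expandAt (r : Fin q → ℝ) (a b : ℝ) (hr : r ⟨k, hk⟩ = a + b) :
    ∑ j, expandAt k hk r a b j = ∑ j, r j := by
  have h := sum_rMerge k hk (expandAt k hk r a b)
  rwa [rMerge_expandAt k hk r a b hr, eq_comm] at h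

lemma strictMono_expandAt {w : Fin q → ℝ} (hw : StrictMono w) {a b : ℝ}
    (ha : ∀ h : 0 < k, w ⟨k - 1, by omega⟩ < a) (hab : a < b)
    (hb : ∀ h : k + 1 < q, b < w ⟨k + 1, h⟩) :
    StrictMono (expandAt k hk w a b) := by
  rw [Fin.strictMono_iff_lt_succ]
  intro i
  simp only [expandAt, Fin.val_castSucc, Fin.val_succ]
  split_ifs <;> first
    | omega
    | exact hab
    | exact hw (Fin.mk_lt_mk.2 (by omega))
    | exact (congrArg w (Fin.ext (by simp only; omega))).trans_lt (ha (by omega))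
    | exact hb (by omega) |>.trans_eq (congrArg w (Fin.ext (by simp only; omega)))

lemma StrictMono.exists_pos_strictMono_expandAt {w : Fin q → ℝ} (hw : StrictMono w) :
    ∃ g > 0, ∀ a b, w ⟨k, hk⟩ - g < a → a < b → b < w ⟨k, hk⟩ + g →
      StrictMono (expandAt k hk w a b) := by
  obtain ⟨gL, hgL, hL⟩ : ∃ g > 0, ∀ h : 0 < k, w ⟨k - 1, by omega⟩ + g ≤ w ⟨k, hk⟩ := by
    by_cases h : 0 < k
    · exact ⟨w ⟨k, hk⟩ - w ⟨k - 1, by omega⟩, sub_pos.2 (hw (Fin.mk_lt_mk.2 (by omega))),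
        fun _ => (add_sub_cancel _ _).le⟩
    · exact ⟨1, one_pos, fun h' => absurd h' h⟩
  obtain ⟨gR, hgR, hR⟩ : ∃ g > 0, ∀ h : k + 1 < q, w ⟨k, hk⟩ + g ≤ w ⟨k + 1, h⟩ := by
    by_cases h : k + 1 < q
    · exact ⟨w ⟨k + 1, h⟩ - w ⟨k, hk⟩, sub_pos.2 (hw (Fin.mk_lt_mk.2 (by omega))),
        fun _ => (add_sub_cancel _ _).le⟩
    · exact ⟨1, one_pos, fun h' => absurd h' h⟩
  refine ⟨min gL gR, lt_min hgL hgR, fun a b ha hab hb =>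
    strictMono_expandAt k hk hw (fun h => ?_) hab (fun h => ?_)⟩
  · linarith [hL h, min_le_left gL gR]
  · linarith [hR h, min_le_right gL gR]

end Expand

section Inequalities

variable {L P B Q : ℝ}

lemma div_sqrt_le_add_div_sqrt_sub (hL : 0 ≤ L) (hP : 0 ≤ P) (hQ : 0 ≤ Q) (hBQ : 0 < B - Q) :
    L / √B ≤ (L + P) / √(B - Q) :=
  div_le_div₀ (by linarith) (by linarith) (sqrt_pos.2 hBQ) (sqrt_le_sqrt (by linarith))

lemma add_div_sqrt_sub_eq_div_sqrt_iff (hL : 0 ≤ L) (hP : 0 ≤ P) (hQ : 0 ≤ Q)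
    (hBQ : 0 < B - Q) : (L + P) / √(B - Q) = L / √B ↔ P = 0 ∧ (L = 0 ∨ Q = 0) := by
  have hsBQ : 0 < √(B - Q) := sqrt_pos.2 hBQ
  have hsB : 0 < √B := sqrt_pos.2 (by linarith)
  constructor
  · intro h
    have hP0 : P = 0 := by
      by_contra hP0
      have : L / √B < (L + P) / √(B - Q) := calc
        L / √B ≤ L / √(B - Q) := div_le_div_of_nonneg_left hL hsBQ (sqrt_le_sqrt (by linarith))
        _ < (L + P) / √(B - Q) := div_lt_div_of_pos_right (by grind) hsBQ
      exact this.ne' h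
    subst hP0
    rw [add_zero, div_eq_div_iff hsBQ.ne' hsB.ne', mul_eq_mul_left_iff,
      sqrt_inj (by linarith) hBQ.le] at h
    exact ⟨rfl, h.elim (fun h => Or.inr (by linarith)) Or.inl⟩
  · rintro ⟨rfl, rfl | rfl⟩ <;> simp

lemma exists_div_sqrt_lt_add_div_sqrt_add {c e : ℝ} (hL : 0 ≤ L) (hc : 0 < c) (hB : 0 < B)
    (he : 0 ≤ e) :
    ∃ δ₀ > 0, ∀ δ, 0 < δ → δ < δ₀ → L / √B < (L + c * δ) / √(B + e * δ ^ 2) := by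
  refine ⟨2 * c * B / (L * e + 1), by positivity, fun δ hδ hδ₀ => ?_⟩
  have hBδ : 0 < B + e * δ ^ 2 := by positivity
  have hLe : L * e * δ < 2 * c * B := by
    rw [lt_div_iff₀ (by positivity)] at hδ₀
    linarith
  have hsq : L ^ 2 * (B + e * δ ^ 2) < (L + c * δ) ^ 2 * B := by
    nlinarith [mul_le_mul_of_nonneg_left hLe.le (mul_nonneg hL hδ.le),
      mul_pos (mul_pos hc hc) (mul_pos (pow_pos hδ 2) hB)]
  rw [div_lt_div_iff₀ (sqrt_pos.2 hB) (sqrt_pos.2 hBδ),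
    ← pow_lt_pow_iff_left₀ (by positivity) (by positivity) two_ne_zero, mul_pow, mul_pow,
    sq_sqrt hBδ.le, sq_sqrt hB.le]
  exact hsq

lemma wavg_mem_Icc {a b x y : ℝ} (ha : 0 ≤ a) (hb : 0 ≤ b) (hab : 0 < a + b) (hxy : x ≤ y) :
    (x * a + y * b) / (a + b) ∈ Set.Icc x y :=
  ⟨by rw [le_div_iff₀ hab]; nlinarith, by rw [div_le_iff₀ hab]; nlinarith⟩

lemma mul_pos_of_cross_eq {r₁ d₁ r₂ d₂ : ℝ} (h₁ : 0 < r₁ ∨ (r₁ = 0 ∧ 0 < d₁))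
    (h₂ : 0 < r₂ ∨ (r₂ = 0 ∧ 0 < d₂)) (hs : 0 < r₁ + r₂) (h : d₁ * r₂ = r₁ * d₂) :
    0 < r₁ * r₂ := by
  rcases h₁ with h₁ | ⟨rfl, hd₁⟩ <;> rcases h₂ with h₂ | ⟨rfl, hd₂⟩
  · positivity
  · nlinarith
  · nlinarith
  · simp at hs

end Inequalities

theorem seqMu_le_seqMu_merge_and_eq_iff {q : ℕ} (k : ℕ) (hk : k < q) {r d w : Fin (q + 1) → ℝ}
    (hw : StrictMono w) (hpos : ∀ j, 0 < r j ∨ (r j = 0 ∧ 0 < d j))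
    (hs : 0 < r ⟨k, Nat.lt_succ_of_lt hk⟩ + r ⟨k + 1, Nat.succ_lt_succ hk⟩)
    (hB : 0 < seqB (rMerge k hk r) (wMerge k hk r w)) (hμ : 0 ≤ seqMu r d w)
    (hΔ : 0 ≤ d ⟨k, Nat.lt_succ_of_lt hk⟩ * r ⟨k + 1, Nat.succ_lt_succ hk⟩ -
      r ⟨k, Nat.lt_succ_of_lt hk⟩ * d ⟨k + 1, Nat.succ_lt_succ hk⟩) :
    seqMu r d w ≤ seqMu (rMerge k hk r) (rMerge k hk d) (wMerge k hk r w) ∧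
      (seqMu (rMerge k hk r) (rMerge k hk d) (wMerge k hk r w) = seqMu r d w ↔
        d ⟨k, Nat.lt_succ_of_lt hk⟩ * r ⟨k + 1, Nat.succ_lt_succ hk⟩ =
            r ⟨k, Nat.lt_succ_of_lt hk⟩ * d ⟨k + 1, Nat.succ_lt_succ hk⟩ ∧
          seqMu r d w = 0) := by
  set i₀ : Fin (q + 1) := ⟨k, by omega⟩
  set i₁ : Fin (q + 1) := ⟨k + 1, by omega⟩
  have hrnn : ∀ l, 0 ≤ r l := fun l => (hpos l).elim le_of_lt fun h => h.1.ge
  have hδ : 0 < w i₁ - w i₀ := sub_pos.2 (hw (Fin.mk_lt_mk.2 k.lt_succ_self))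
  have hR : 0 < ∑ l, r l :=
    hs.trans_le (add_le_sum (fun l _ => hrnn l) (mem_univ i₀) (mem_univ i₁) (by simp [i₀, i₁]))
  have hP : 0 ≤ (w i₁ - w i₀) * (∑ l, r l) * (d i₀ * r i₁ - r i₀ * d i₁) / (r i₀ + r i₁) :=
    div_nonneg (mul_nonneg (mul_nonneg hδ.le hR.le) hΔ) hs.le
  have hQ : 0 ≤ (w i₁ - w i₀) ^ 2 * r i₀ * r i₁ / (r i₀ + r i₁) :=
    div_nonneg (mul_nonneg (mul_nonneg (sq_nonneg _) (hrnn i₀)) (hrnn i₁)) hs.le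
  rw [seqB_merge k hk r w hs.ne'] at hB
  have hB' : 0 < seqB r w := by linarith
  have hL := seqL_nonneg_of_seqMu_nonneg hB' hμ
  rw [seqMu_eq_zero_iff hB', seqMu_eq, seqMu_eq, seqL_merge k hk r d w hs.ne',
    seqB_merge k hk r w hs.ne', add_div_sqrt_sub_eq_div_sqrt_iff hL hP hQ hB]
  refine ⟨div_sqrt_le_add_div_sqrt_sub hL hP hQ hB, ?_⟩
  have hP0 : (w i₁ - w i₀) * (∑ l, r l) * (d i₀ * r i₁ - r i₀ * d i₁) / (r i₀ + r i₁) = 0 ↔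
      d i₀ * r i₁ = r i₀ * d i₁ := by
    simp [div_eq_zero_iff, hδ.ne', hR.ne', hs.ne', sub_eq_zero]
  rw [hP0]
  constructor
  · rintro ⟨hΔ0, hL0 | hQ0⟩
    · exact ⟨hΔ0, hL0⟩
    · have hrr := mul_pos_of_cross_eq (hpos i₀) (hpos i₁) hs hΔ0
      have hQpos : 0 < (w i₁ - w i₀) ^ 2 * r i₀ * r i₁ / (r i₀ + r i₁) := by
        rw [mul_assoc]
        positivity
      exact absurd hQ0 hQpos.ne'
  · exact fun ⟨hΔ0, hL0⟩ => ⟨hΔ0, Or.inl hL0⟩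

section Insertion

variable {q : ℕ} (k : ℕ) (hk : k < q) {r d w : Fin q → ℝ} {rk dk rk1 dk1 wk wk1 : ℝ}

lemma seqL_expandAt (hr : r ⟨k, hk⟩ = rk + rk1) (hd : d ⟨k, hk⟩ = dk + dk1)
    (hs : rk + rk1 ≠ 0) (hw : (wk * rk + wk1 * rk1) / (rk + rk1) = w ⟨k, hk⟩) :
    seqL (expandAt k hk r rk rk1) (expandAt k hk d dk dk1) (expandAt k hk w wk wk1) =
      seqL r d w + (wk1 - wk) * (∑ j, r j) * (rk * dk1 - dk * rk1) / (rk + rk1) := by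
  have h := seqL_merge k hk (expandAt k hk r rk rk1) (expandAt k hk d dk dk1)
    (expandAt k hk w wk wk1) (by simpa using hs)
  rw [rMerge_expandAt k hk r rk rk1 hr, rMerge_expandAt k hk d dk dk1 hd,
    wMerge_expandAt k hk r w rk rk1 wk wk1 hw, sum_expandAt k hk r rk rk1 hr] at h
  simp only [expandAt_left, expandAt_right] at h
  linear_combination -h

lemma seqB_expandAt (hr : r ⟨k, hk⟩ = rk + rk1) (hs : rk + rk1 ≠ 0)
    (hw : (wk * rk + wk1 * rk1) / (rk + rk1) = w ⟨k, hk⟩) :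
    seqB (expandAt k hk r rk rk1) (expandAt k hk w wk wk1) =
      seqB r w + (wk1 - wk) ^ 2 * rk * rk1 / (rk + rk1) := by
  have h := seqB_merge k hk (expandAt k hk r rk rk1) (expandAt k hk w wk wk1) (by simpa using hs)
  rw [rMerge_expandAt k hk r rk rk1 hr, wMerge_expandAt k hk r w rk rk1 wk wk1 hw] at h
  simp only [expandAt_left, expandAt_right] at h
  linear_combination -h

theorem exists_seqMu_lt_seqMu_expandAt (hpos : ∀ j, 0 < r j ∨ (r j = 0 ∧ 0 < d j))
    (hw : StrictMono w) (hB : 0 < seqB r w) (hμ : 0 ≤ seqMu r d w)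
    (hpk : 0 < rk ∨ (rk = 0 ∧ 0 < dk)) (hpk1 : 0 < rk1 ∨ (rk1 = 0 ∧ 0 < dk1))
    (hs : 0 < rk + rk1) (hr : r ⟨k, hk⟩ = rk + rk1) (hd : d ⟨k, hk⟩ = dk + dk1)
    (hΔ : dk * rk1 - rk * dk1 < 0) :
    ∃ δ₀ : ℝ, 0 < δ₀ ∧ ∀ δ : ℝ, 0 < δ → δ < δ₀ →
      ∀ wk wk1 : ℝ, wk1 - wk = δ →
        (wk * rk + wk1 * rk1) / (rk + rk1) = w ⟨k, hk⟩ →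
        StrictMono (expandAt k hk w wk wk1) ∧
          seqMu r d w < seqMu (expandAt k hk r rk rk1) (expandAt k hk d dk dk1)
            (expandAt k hk w wk wk1) := by
  have hrk : 0 ≤ rk := hpk.elim le_of_lt fun h => h.1.ge
  have hrk1 : 0 ≤ rk1 := hpk1.elim le_of_lt fun h => h.1.ge
  have hR : 0 < ∑ j, r j := hs.trans_le <| hr ▸
    single_le_sum (fun j _ => (hpos j).elim le_of_lt fun h => h.1.ge) (mem_univ _)
  obtain ⟨g, hg, hmono⟩ := hw.exists_pos_strictMono_expandAt k hk
  obtain ⟨δ₁, hδ₁, hlt⟩ := exists_div_sqrt_lt_add_div_sqrt_add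
    (c := (∑ j, r j) * (rk * dk1 - dk * rk1) / (rk + rk1)) (e := rk * rk1 / (rk + rk1))
    (seqL_nonneg_of_seqMu_nonneg hB hμ) (div_pos (mul_pos hR (by linarith)) hs) hB
    (by positivity)
  refine ⟨min g δ₁, lt_min hg hδ₁, fun δ hδ hδ₀ wk wk1 hδw havg => ⟨?_, ?_⟩⟩
  · have hmem := wavg_mem_Icc hrk hrk1 hs (show wk ≤ wk1 by linarith)
    rw [havg] at hmem
    exact hmono wk wk1 (by linarith [hmem.2, min_le_left g δ₁]) (by linarith)
      (by linarith [hmem.1, min_le_left g δ₁])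
  · rw [seqMu_eq, seqMu_eq, seqL_expandAt k hk hr hd hs.ne' havg,
      seqB_expandAt k hk hr hs.ne' havg, hδw]
    convert hlt δ hδ (hδ₀.trans_le (min_le_right _ _)) using 3 <;> ring

end Insertion

/-- Insertion and deletion for rank–degree–weight sequences: deleting an entry whose phase is
not bigger than that of the previous entry does not decrease the numerical invariant `μ`
(part (1)), and inserting an entry with strictly bigger phase strictly increases `μ`,
for a sufficiently small weight perturbation `δ` (part (2)). -/
theorem insertion_deletion_rank_degree_weight {q : ℕ} (k : ℕ) (hk : k < q) :
    (∀ r d w : Fin (q + 1) → ℝ,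
      StrictMono w →
      (∀ j, 0 < r j ∨ (r j = 0 ∧ 0 < d j)) →
      0 < r ⟨k, by omega⟩ + r ⟨k + 1, by omega⟩ →
      0 < ∑ j, (wMerge k hk r w j) ^ 2 * rMerge k hk r j →
      0 ≤ seqMu r d w →
      0 ≤ d ⟨k, by omega⟩ * r ⟨k + 1, by omega⟩ - r ⟨k, by omega⟩ * d ⟨k + 1, by omega⟩ →
      seqMu r d w ≤ seqMu (rMerge k hk r) (rMerge k hk d) (wMerge k hk r w) ∧
        (seqMu (rMerge k hk r) (rMerge k hk d) (wMerge k hk r w) = seqMu r d w ↔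
          d ⟨k, by omega⟩ * r ⟨k + 1, by omega⟩ = r ⟨k, by omega⟩ * d ⟨k + 1, by omega⟩ ∧
            seqMu r d w = 0)) ∧
    (∀ r' d' w' : Fin q → ℝ,
      (∀ j, 0 < r' j ∨ (r' j = 0 ∧ 0 < d' j)) →
      StrictMono w' →
      0 < ∑ j, (w' j) ^ 2 * r' j →
      0 ≤ seqMu r' d' w' →
      ∀ rk dk rk1 dk1 : ℝ,
        (0 < rk ∨ (rk = 0 ∧ 0 < dk)) →
        (0 < rk1 ∨ (rk1 = 0 ∧ 0 < dk1)) →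
        0 < rk + rk1 →
        r' ⟨k, hk⟩ = rk + rk1 →
        d' ⟨k, hk⟩ = dk + dk1 →
        dk * rk1 - rk * dk1 < 0 →
        ∃ δ₀ : ℝ, 0 < δ₀ ∧ ∀ δ : ℝ, 0 < δ → δ < δ₀ →
          ∀ wk wk1 : ℝ, wk1 - wk = δ →
            (wk * rk + wk1 * rk1) / (rk + rk1) = w' ⟨k, hk⟩ →
            StrictMono (expandAt k hk w' wk wk1) ∧
              seqMu r' d' w' <
                seqMu (expandAt k hk r' rk rk1) (expandAt k hk d' dk dk1)
                  (expandAt k hk w' wk wk1)) := by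
  exact ⟨fun _ _ _ => seqMu_le_seqMu_merge_and_eq_iff k hk,
    fun _ _ _ hpos hw hB hμ _ _ _ _ => exists_seqMu_lt_seqMu_expandAt k hk hpos hw hB hμ⟩
end

section
/- Let p ≥ 2, let r_1, …, r_p > 0 and d_1, …, d_p ∈ ℝ be such that ν_j := d_j/r_j satisfy ν_1 < ν_2 < ⋯ < ν_p. Set R := Σ_j r_j, D := Σ_j d_j, and ν := D/R. Then for every w ∈ ℝ^p with w ≠ 0, Σ_j w_j (R d_j − D r_j) / √(Σ_j w_j² r_j) ≤ R·√(Σ_j ν_j² r_j − ν² R), with equality if and only if w is a positive scalar multiple of the vector (ν_1 − ν, ν_2 − ν, …, ν_p − ν); in particular the maximizing weight vector is strictly increasing, and the maximum value of the left-hand side over all nonzero w equals R·√(Σ_j ν_j² r_j − ν² R). -/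
/-! With respect to the weighted inner product `⟪a, b⟫ = ∑ⱼ aⱼ bⱼ rⱼ`, realised on Euclidean space
by `w ↦ (√rⱼ wⱼ)ⱼ`, the numerator of the invariant is `R ⟪w, u⟫` with `uⱼ = νⱼ - ν`, and
`⟪u, u⟫ = ∑ⱼ νⱼ² rⱼ - ν² R`. Cauchy–Schwarz therefore bounds the invariant by `R ‖u‖`, with
equality exactly at the positive multiples of `u`; and `u` is strictly increasing because the
slopes are, so it is nonzero as soon as there are two of them. -/

open scoped RealInnerProductSpace

section InnerProductSpace

variable {F : Type*} [NormedAddCommGroup F] [InnerProductSpace ℝ F]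

theorem real_inner_div_norm_le_norm (x u : F) : ⟪x, u⟫ / ‖x‖ ≤ ‖u‖ := by
  rcases eq_or_ne x 0 with rfl | hx
  · simp
  · rw [div_le_iff₀ (norm_pos_iff.mpr hx), mul_comm]
    exact real_inner_le_norm x u

theorem real_inner_div_norm_eq_norm_iff {x u : F} (hx : x ≠ 0) (hu : u ≠ 0) :
    ⟪x, u⟫ / ‖x‖ = ‖u‖ ↔ ∃ c : ℝ, 0 < c ∧ x = c • u := by
  have hxu : ‖u‖ * ‖x‖ ≠ 0 := by positivity
  rw [div_eq_iff (norm_ne_zero_iff.mpr hx), ← div_eq_one_iff_eq hxu, real_inner_comm,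
    real_inner_div_norm_mul_norm_eq_one_iff, and_iff_right hu]

end InnerProductSpace

section Weighted

variable {ι : Type*}

noncomputable def weightedToEuclidean (r : ι → ℝ) : (ι → ℝ) →ₗ[ℝ] EuclideanSpace ℝ ι where
  toFun w := WithLp.toLp 2 fun j => √(r j) * w j
  map_add' _ _ := by ext; simp [mul_add]
  map_smul' _ _ := by ext; simp [mul_left_comm]

theorem inner_weightedToEuclidean [Fintype ι] {r : ι → ℝ} (hr : ∀ j, 0 ≤ r j) (w v : ι → ℝ) :
    ⟪weightedToEuclidean r w, weightedToEuclidean r v⟫ = ∑ j, w j * v j * r j := by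
  simp only [weightedToEuclidean, LinearMap.coe_mk, AddHom.coe_mk, PiLp.inner_apply,
    RCLike.inner_apply, conj_trivial]
  refine Finset.sum_congr rfl fun j _ => ?_
  linear_combination (w j * v j) * Real.mul_self_sqrt (hr j)

theorem norm_weightedToEuclidean [Fintype ι] {r : ι → ℝ} (hr : ∀ j, 0 ≤ r j) (w : ι → ℝ) :
    ‖weightedToEuclidean r w‖ = √(∑ j, w j ^ 2 * r j) := by
  simp only [norm_eq_sqrt_real_inner, inner_weightedToEuclidean hr, sq]

theorem weightedToEuclidean_injective {r : ι → ℝ} (hr : ∀ j, 0 < r j) :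
    Function.Injective (weightedToEuclidean r) := by
  intro w v h
  funext j
  have hj := congrArg (fun x : EuclideanSpace ℝ ι => x j) h
  exact mul_left_cancel₀ (Real.sqrt_pos.mpr (hr j)).ne' hj

end Weighted

section NumericalInvariant

variable {ι : Type*} [Fintype ι] {r d : ι → ℝ}

noncomputable def numericalInvariant (r d w : ι → ℝ) : ℝ :=
  (∑ j, w j * ((∑ i, r i) * d j - (∑ i, d i) * r j)) / √(∑ j, w j ^ 2 * r j)

noncomputable def slopeDeviation (r d : ι → ℝ) (j : ι) : ℝ :=
  d j / r j - (∑ i, d i) / ∑ i, r i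

theorem sum_mul_sub_eq_mul_sum_slopeDeviation (hr : ∀ j, r j ≠ 0) (hR : ∑ i, r i ≠ 0)
    (w : ι → ℝ) :
    ∑ j, w j * ((∑ i, r i) * d j - (∑ i, d i) * r j) =
      (∑ i, r i) * ∑ j, w j * slopeDeviation r d j * r j := by
  rw [Finset.mul_sum]
  refine Finset.sum_congr rfl fun j _ => ?_
  rw [slopeDeviation]
  field_simp [hr j]

theorem sum_slopeDeviation_sq_mul (hr : ∀ j, r j ≠ 0) (hR : ∑ i, r i ≠ 0) :
    ∑ j, slopeDeviation r d j ^ 2 * r j =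
      ∑ j, (d j / r j) ^ 2 * r j - ((∑ i, d i) / ∑ i, r i) ^ 2 * ∑ i, r i := by
  set μ := (∑ i, d i) / ∑ i, r i
  have hslope : ∀ j, d j / r j * r j = d j := fun j => div_mul_cancel₀ _ (hr j)
  have hD : ∑ i, d i = μ * ∑ i, r i := (div_mul_cancel₀ _ hR).symm
  calc ∑ j, slopeDeviation r d j ^ 2 * r j
      = ∑ j, ((d j / r j) ^ 2 * r j - 2 * μ * d j + μ ^ 2 * r j) := by
        refine Finset.sum_congr rfl fun j _ => ?_
        rw [slopeDeviation]
        linear_combination (-2 * μ) * hslope j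
    _ = ∑ j, (d j / r j) ^ 2 * r j - μ ^ 2 * ∑ i, r i := by
        rw [Finset.sum_add_distrib, Finset.sum_sub_distrib, ← Finset.mul_sum, ← Finset.mul_sum, hD]
        ring

theorem numericalInvariant_eq_mul_real_inner_div_norm (hr : ∀ j, 0 < r j)
    (hR : 0 < ∑ i, r i) (w : ι → ℝ) :
    numericalInvariant r d w = (∑ i, r i) *
      (⟪weightedToEuclidean r w, weightedToEuclidean r (slopeDeviation r d)⟫ /
        ‖weightedToEuclidean r w‖) := by
  have hr' : ∀ j, 0 ≤ r j := fun j => (hr j).le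
  rw [numericalInvariant, sum_mul_sub_eq_mul_sum_slopeDeviation (fun j => (hr j).ne') hR.ne',
    inner_weightedToEuclidean hr', norm_weightedToEuclidean hr', mul_div_assoc]

theorem numericalInvariant_le (hr : ∀ j, 0 < r j) (hR : 0 < ∑ i, r i) (w : ι → ℝ) :
    numericalInvariant r d w ≤
      (∑ i, r i) * ‖weightedToEuclidean r (slopeDeviation r d)‖ := by
  rw [numericalInvariant_eq_mul_real_inner_div_norm hr hR]
  exact mul_le_mul_of_nonneg_left (real_inner_div_norm_le_norm _ _) hR.le

theorem numericalInvariant_eq_iff (hr : ∀ j, 0 < r j) (hR : 0 < ∑ i, r i)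
    (hu : slopeDeviation r d ≠ 0) {w : ι → ℝ} (hw : w ≠ 0) :
    numericalInvariant r d w = (∑ i, r i) * ‖weightedToEuclidean r (slopeDeviation r d)‖ ↔
      ∃ c : ℝ, 0 < c ∧ w = c • slopeDeviation r d := by
  have he := weightedToEuclidean_injective hr
  rw [numericalInvariant_eq_mul_real_inner_div_norm hr hR, mul_right_inj' hR.ne',
    real_inner_div_norm_eq_norm_iff ((map_ne_zero_iff _ he).mpr hw)
      ((map_ne_zero_iff _ he).mpr hu)]
  simp only [← map_smul, he.eq_iff]

end NumericalInvariant

/-- Explicit maximum of the numerical invariant over the weights of a filtration with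
strictly increasing slopes: for ranks `r j > 0` and degrees `d j` with slopes
`ν j = d j / r j` strictly increasing, the quantity
`(∑ⱼ wⱼ (R dⱼ − D rⱼ)) / √(∑ⱼ wⱼ² rⱼ)` over nonzero weight vectors `w` is maximized
exactly by the positive multiples of `(ν₁ − ν, …, ν_p − ν)` (where `R = ∑ rⱼ`, `D = ∑ dⱼ`,
`ν = D / R`), which is a strictly increasing weight vector, and the maximal value is
`R √(∑ νⱼ² rⱼ − ν² R)`. -/
theorem explicit_maximum_of_numerical_invariant {p : ℕ} (hp : 2 ≤ p)
    (r d : Fin p → ℝ) (hr : ∀ j, 0 < r j)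
    (hν : StrictMono fun j => d j / r j) :
    (∀ w : Fin p → ℝ, w ≠ 0 →
      (∑ j, w j * ((∑ i, r i) * d j - (∑ i, d i) * r j)) / Real.sqrt (∑ j, (w j) ^ 2 * r j) ≤
        (∑ i, r i) *
          Real.sqrt ((∑ j, (d j / r j) ^ 2 * r j) -
            ((∑ i, d i) / (∑ i, r i)) ^ 2 * (∑ i, r i))) ∧
    (∀ w : Fin p → ℝ, w ≠ 0 →
      ((∑ j, w j * ((∑ i, r i) * d j - (∑ i, d i) * r j)) / Real.sqrt (∑ j, (w j) ^ 2 * r j) =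
          (∑ i, r i) *
            Real.sqrt ((∑ j, (d j / r j) ^ 2 * r j) -
              ((∑ i, d i) / (∑ i, r i)) ^ 2 * (∑ i, r i)) ↔
        ∃ c : ℝ, 0 < c ∧ w = fun j => c * (d j / r j - (∑ i, d i) / (∑ i, r i)))) ∧
    StrictMono (fun j => d j / r j - (∑ i, d i) / (∑ i, r i)) ∧
    IsGreatest
      ((fun w : Fin p → ℝ =>
          (∑ j, w j * ((∑ i, r i) * d j - (∑ i, d i) * r j)) /
            Real.sqrt (∑ j, (w j) ^ 2 * r j)) '' {w | w ≠ 0})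
      ((∑ i, r i) *
        Real.sqrt ((∑ j, (d j / r j) ^ 2 * r j) -
          ((∑ i, d i) / (∑ i, r i)) ^ 2 * (∑ i, r i))) := by
  have hR : 0 < ∑ i, r i := Finset.sum_pos (fun i _ => hr i) ⟨⟨0, by omega⟩, Finset.mem_univ _⟩
  have hu : StrictMono (slopeDeviation r d) := fun i j hij => sub_lt_sub_right (hν hij) _
  have hu0 : slopeDeviation r d ≠ 0 := by
    have := Fin.nontrivial_iff_two_le.mpr hp
    obtain ⟨i, j, hij⟩ := exists_pair_ne (Fin p)
    exact fun h => hij (hu.injective (by simp [h]))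
  have hmax : √((∑ j, (d j / r j) ^ 2 * r j) - ((∑ i, d i) / (∑ i, r i)) ^ 2 * (∑ i, r i)) =
      ‖weightedToEuclidean r (slopeDeviation r d)‖ := by
    rw [norm_weightedToEuclidean fun j => (hr j).le,
      sum_slopeDeviation_sq_mul (fun j => (hr j).ne') hR.ne']
  rw [hmax]
  have hle (w : Fin p → ℝ) := numericalInvariant_le (d := d) hr hR w
  have heq {w : Fin p → ℝ} (hw : w ≠ 0) := numericalInvariant_eq_iff hr hR hu0 hw
  -- the goal states these for `numericalInvariant r d w` and `c • slopeDeviation r d` unfolded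
  refine ⟨fun w _ => hle w, fun w => heq, hu,
    ⟨_, hu0, (heq hu0).mpr ⟨1, one_pos, (one_smul _ _).symm⟩⟩, ?_⟩
  rintro _ ⟨w, -, rfl⟩
  exact hle w
end

section
/- Let R > 0 and let h₁, h₂ : [0, R] → ℝ be twice continuously differentiable functions with h_i''(x) < 0 for all x ∈ [0, R] (i = 1, 2), with h₁(x) ≤ h₂(x) for all x ∈ [0, R], and with h₁(0) = h₂(0) and h₁(R) = h₂(R). Then ∫₀^R (h₁′(x))² dx ≤ ∫₀^R (h₂′(x))² dx, and the inequality is strict unless h₁ = h₂ on [0, R]. -/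
/-!
Put `u = h₂ - h₁ ≥ 0`, which vanishes at `0` and `R`. Expanding `f₂ = f₁ + u'` and integrating
`f₁ u'` by parts gives
`∫ f₂² - ∫ f₁² = ∫ (u')² + 2 ∫ (-h₁'') u`,
and both terms on the right are nonnegative. If the left side vanishes, so does `∫ (-h₁'') u`;
since `-h₁'' > 0` and the integrand is continuous and nonnegative, `u = 0` on `[0, R]`.
-/

open Set intervalIntegral

section

variable {a b : ℝ}

theorem integral_mul_deriv_eq_neg_integral_deriv_mul_of_eq_zero {f f' u u' : ℝ → ℝ} (hab : a ≤ b)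
    (hf : ∀ x ∈ Icc a b, HasDerivWithinAt f (f' x) (Icc a b) x)
    (hu : ∀ x ∈ Icc a b, HasDerivWithinAt u (u' x) (Icc a b) x)
    (hf' : IntervalIntegrable f' MeasureTheory.volume a b)
    (hu' : IntervalIntegrable u' MeasureTheory.volume a b)
    (ha : u a = 0) (hb : u b = 0) :
    ∫ x in a..b, f x * u' x = -∫ x in a..b, f' x * u x := by
  rw [← uIcc_of_le hab] at hf hu
  rw [integral_mul_deriv_eq_deriv_mul_of_hasDerivWithinAt hf hu hf' hu', ha, hb]
  ring

theorem integral_sq_sub_integral_sq {f₁ f₂ : ℝ → ℝ} (hab : a ≤ b)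
    (hf₁ : ContinuousOn f₁ (Icc a b)) (hf₂ : ContinuousOn f₂ (Icc a b)) :
    (∫ x in a..b, f₂ x ^ 2) - ∫ x in a..b, f₁ x ^ 2 =
      (∫ x in a..b, (f₂ x - f₁ x) ^ 2) + 2 * ∫ x in a..b, f₁ x * (f₂ x - f₁ x) := by
  rw [← integral_sub, ← integral_const_mul, ← integral_add]
  · congr 1 with x
    ring
  all_goals exact ContinuousOn.intervalIntegrable_of_Icc hab (by fun_prop)

theorem integral_sq_deriv_sub_integral_sq_deriv {h₁ h₂ f₁ f₂ g₁ : ℝ → ℝ} (hab : a ≤ b)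
    (hh₁ : ∀ x ∈ Icc a b, HasDerivWithinAt h₁ (f₁ x) (Icc a b) x)
    (hh₂ : ∀ x ∈ Icc a b, HasDerivWithinAt h₂ (f₂ x) (Icc a b) x)
    (hf₁ : ∀ x ∈ Icc a b, HasDerivWithinAt f₁ (g₁ x) (Icc a b) x)
    (hf₂ : ContinuousOn f₂ (Icc a b)) (hg₁ : ContinuousOn g₁ (Icc a b))
    (ha : h₁ a = h₂ a) (hb : h₁ b = h₂ b) :
    (∫ x in a..b, f₂ x ^ 2) - ∫ x in a..b, f₁ x ^ 2 =
      (∫ x in a..b, (f₂ x - f₁ x) ^ 2) + 2 * ∫ x in a..b, -g₁ x * (h₂ x - h₁ x) := by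
  have hf₁c : ContinuousOn f₁ (Icc a b) := fun x hx => (hf₁ x hx).continuousWithinAt
  have hparts := integral_mul_deriv_eq_neg_integral_deriv_mul_of_eq_zero
    (u := fun x => h₂ x - h₁ x) hab hf₁ (fun x hx => (hh₂ x hx).sub (hh₁ x hx))
    (hg₁.intervalIntegrable_of_Icc hab) ((hf₂.sub hf₁c).intervalIntegrable_of_Icc hab)
    (sub_eq_zero.2 ha.symm) (sub_eq_zero.2 hb.symm)
  simp only [neg_mul, integral_neg]
  rw [integral_sq_sub_integral_sq hab hf₁c hf₂, hparts]

end

theorem sq_deriv_integral_mono_of_concave_general (R : ℝ) (hR : 0 < R)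
    (h₁ h₂ f₁ f₂ g₁ g₂ : ℝ → ℝ)
    (hd1 : ∀ x ∈ Icc (0 : ℝ) R, HasDerivWithinAt h₁ (f₁ x) (Icc (0 : ℝ) R) x)
    (hd2 : ∀ x ∈ Icc (0 : ℝ) R, HasDerivWithinAt h₂ (f₂ x) (Icc (0 : ℝ) R) x)
    (hdd1 : ∀ x ∈ Icc (0 : ℝ) R, HasDerivWithinAt f₁ (g₁ x) (Icc (0 : ℝ) R) x)
    (hdd2 : ∀ x ∈ Icc (0 : ℝ) R, HasDerivWithinAt f₂ (g₂ x) (Icc (0 : ℝ) R) x)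
    (hc1 : ContinuousOn g₁ (Icc (0 : ℝ) R))
    (hneg1 : ∀ x ∈ Icc (0 : ℝ) R, g₁ x < 0)
    (hle : ∀ x ∈ Icc (0 : ℝ) R, h₁ x ≤ h₂ x)
    (hend0 : h₁ 0 = h₂ 0) (hendR : h₁ R = h₂ R) :
    (∫ x in (0 : ℝ)..R, (f₁ x) ^ 2) ≤ (∫ x in (0 : ℝ)..R, (f₂ x) ^ 2) ∧
      ((∫ x in (0 : ℝ)..R, (f₁ x) ^ 2) = (∫ x in (0 : ℝ)..R, (f₂ x) ^ 2) →
        EqOn h₁ h₂ (Icc (0 : ℝ) R)) := by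
  have hcont {h f : ℝ → ℝ} (hd : ∀ x ∈ Icc (0 : ℝ) R, HasDerivWithinAt h (f x) (Icc 0 R) x) :
      ContinuousOn h (Icc 0 R) := fun x hx => (hd x hx).continuousWithinAt
  have hdiff :=
    integral_sq_deriv_sub_integral_sq_deriv hR.le hd1 hd2 hdd1 (hcont hdd2) hc1 hend0 hendR
  have hweight_nonneg (x : ℝ) (hx : x ∈ Icc 0 R) : 0 ≤ -g₁ x * (h₂ x - h₁ x) :=
    mul_nonneg (neg_nonneg.2 (hneg1 x hx).le) (sub_nonneg.2 (hle x hx))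
  have hsq : 0 ≤ ∫ x in (0 : ℝ)..R, (f₂ x - f₁ x) ^ 2 :=
    integral_nonneg hR.le fun x _ => sq_nonneg _
  have hweight : 0 ≤ ∫ x in (0 : ℝ)..R, -g₁ x * (h₂ x - h₁ x) :=
    integral_nonneg hR.le hweight_nonneg
  refine ⟨by linarith, fun heq x hx => ?_⟩
  by_contra hne
  have hpos : 0 < ∫ x in (0 : ℝ)..R, -g₁ x * (h₂ x - h₁ x) :=
    integral_pos hR (hc1.neg.mul ((hcont hd2).sub (hcont hd1)))
      (fun y hy => hweight_nonneg y (Ioc_subset_Icc_self hy))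
      ⟨x, hx, mul_pos (neg_pos.2 (hneg1 x hx)) (sub_pos.2 ((hle x hx).lt_of_ne hne))⟩
  linarith

/-- If `h₁ ≤ h₂` are twice continuously differentiable strictly concave
(`hᵢ'' < 0`) functions on `[0, R]` agreeing at the endpoints, then
`∫₀ᴿ (h₁')² ≤ ∫₀ᴿ (h₂')²`, with strict inequality unless `h₁ = h₂` on `[0, R]`.
Here `fᵢ` and `gᵢ` denote the first and second derivatives of `hᵢ` on `[0, R]`. -/
theorem sq_deriv_integral_mono_of_concave (R : ℝ) (hR : 0 < R)
    (h₁ h₂ f₁ f₂ g₁ g₂ : ℝ → ℝ)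
    (hd1 : ∀ x ∈ Icc (0 : ℝ) R, HasDerivWithinAt h₁ (f₁ x) (Icc (0 : ℝ) R) x)
    (hd2 : ∀ x ∈ Icc (0 : ℝ) R, HasDerivWithinAt h₂ (f₂ x) (Icc (0 : ℝ) R) x)
    (hdd1 : ∀ x ∈ Icc (0 : ℝ) R, HasDerivWithinAt f₁ (g₁ x) (Icc (0 : ℝ) R) x)
    (hdd2 : ∀ x ∈ Icc (0 : ℝ) R, HasDerivWithinAt f₂ (g₂ x) (Icc (0 : ℝ) R) x)
    (hc1 : ContinuousOn g₁ (Icc (0 : ℝ) R))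
    (hc2 : ContinuousOn g₂ (Icc (0 : ℝ) R))
    (hneg1 : ∀ x ∈ Icc (0 : ℝ) R, g₁ x < 0)
    (hneg2 : ∀ x ∈ Icc (0 : ℝ) R, g₂ x < 0)
    (hle : ∀ x ∈ Icc (0 : ℝ) R, h₁ x ≤ h₂ x)
    (hend0 : h₁ 0 = h₂ 0) (hendR : h₁ R = h₂ R) :
    (∫ x in (0 : ℝ)..R, (f₁ x) ^ 2) ≤ (∫ x in (0 : ℝ)..R, (f₂ x) ^ 2) ∧
      ((∫ x in (0 : ℝ)..R, (f₁ x) ^ 2) = (∫ x in (0 : ℝ)..R, (f₂ x) ^ 2) →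
        EqOn h₁ h₂ (Icc (0 : ℝ) R)) :=
  sq_deriv_integral_mono_of_concave_general R hR h₁ h₂ f₁ f₂ g₁ g₂ hd1 hd2 hdd1 hdd2 hc1 hneg1 hle
    hend0 hendR
end
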